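/- arXiv:2508.12914 — 9 statements merged into one kernel-verified Lean document; each statement's English description precedes it below -/
import Mathlib

section
/- Let L ≥ 1 and let f : ℝ → ℝ be a homeomorphism which is L-Lipschitz and satisfies f(x+1) = f(x) + σ for all x ∈ ℝ, where σ ∈ {+1, −1}. Then sup_{x ∈ ℝ} |f(x) − (σ·x + f(0))| ≤ (L−1)/L. -/
private lemma arith_aux (L x u : ℝ) (hL : 1 ≤ L) (hx0 : 0 ≤ x) (hx1 : x ≤ 1)
    (hu0 : 0 ≤ u) (hu1 : u ≤ 1) (h1 : u ≤ L * x) (h2 : 1 - u ≤ L * (1 - x)) :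
    |u - x| ≤ (L - 1) / L := by
  have hL0 : (0:ℝ) < L := lt_of_lt_of_le one_pos hL
  rw [abs_le]
  constructor
  · rw [neg_le, le_div_iff₀ hL0]
    rcases le_or_gt ((1 - x) * L) 1 with h | h
    · nlinarith
    · nlinarith
  · rw [le_div_iff₀ hL0]
    rcases le_or_gt (x * L) 1 with h | h
    · nlinarith
    · nlinarith

/-- Let `L ≥ 1` and let `f : ℝ → ℝ` be a homeomorphism which is
`L`-Lipschitz and satisfies `f (x + 1) = f x + σ` for all `x`, where `σ ∈ {+1, -1}`.
Then `|f x - (σ * x + f 0)| ≤ (L - 1) / L` for every `x ∈ ℝ` (i.e. the sup over `x`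
is at most `(L - 1) / L`). -/
theorem lift_close_to_translation (L : ℝ) (hL : 1 ≤ L) (σ : ℝ) (hσ : σ = 1 ∨ σ = -1)
    (f : ℝ ≃ₜ ℝ)
    (hlip : ∀ x y : ℝ, |f x - f y| ≤ L * |x - y|)
    (hper : ∀ x : ℝ, f (x + 1) = f x + σ) :
    ∀ x : ℝ, |f x - (σ * x + f 0)| ≤ (L - 1) / L := by
  have hσ2 : σ * σ = 1 := by rcases hσ with h | h <;> rw [h] <;> norm_num
  have hσabs : |σ| = 1 := by rcases hσ with h | h <;> rw [h] <;> norm_num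
  have hf1 : f 1 = f 0 + σ := by rw [← hper 0, zero_add]
  -- the key estimate on [0,1]
  have key : ∀ t : ℝ, 0 ≤ t → t ≤ 1 → |f t - (σ * t + f 0)| ≤ (L - 1) / L := by
    intro t ht0 ht1
    set u : ℝ := σ * (f t - f 0) with hu
    have habs : |u| = |f t - f 0| := by rw [abs_mul, hσabs, one_mul]
    have hmem : t ∈ Set.Icc (0:ℝ) 1 := ⟨ht0, ht1⟩
    have hmem0 : (0:ℝ) ∈ Set.Icc (0:ℝ) 1 := by norm_num
    have hmem1 : (1:ℝ) ∈ Set.Icc (0:ℝ) 1 := by norm_num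
    -- bounds 0 ≤ u ≤ 1 from monotonicity
    have hu01 : 0 ≤ u ∧ u ≤ 1 := by
      rcases hσ with h | h
      · have hmono : StrictMonoOn f (Set.Icc (0:ℝ) 1) :=
          ContinuousOn.strictMonoOn_of_injOn_Icc zero_le_one
            (by rw [hf1, h]; linarith) f.continuous.continuousOn
            (f.injective.injOn)
        have h1 : f 0 ≤ f t := hmono.monotoneOn hmem0 hmem ht0
        have h2 : f t ≤ f 1 := hmono.monotoneOn hmem hmem1 ht1
        rw [hf1, h] at h2
        constructor <;> simp [hu, h] <;> linarith
      · have hmono : StrictAntiOn f (Set.Icc (0:ℝ) 1) :=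
          ContinuousOn.strictAntiOn_of_injOn_Icc zero_le_one
            (by rw [hf1, h]; linarith) f.continuous.continuousOn
            (f.injective.injOn)
        have h1 : f t ≤ f 0 := hmono.antitoneOn hmem0 hmem ht0
        have h2 : f 1 ≤ f t := hmono.antitoneOn hmem hmem1 ht1
        rw [hf1, h] at h2
        constructor <;> simp [hu, h] <;> linarith
    -- Lipschitz bounds
    have hb1 : u ≤ L * t := by
      have := hlip t 0
      rw [sub_zero, abs_of_nonneg ht0] at this
      calc u ≤ |u| := le_abs_self _
        _ = |f t - f 0| := habs
        _ ≤ L * t := this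
    have hb2 : 1 - u ≤ L * (1 - t) := by
      have h := hlip 1 t
      rw [abs_of_nonneg (by linarith : (0:ℝ) ≤ 1 - t)] at h
      have heq : σ * (f 1 - f t) = 1 - u := by
        rw [hf1, hu]; ring_nf; nlinarith [hσ2]
      calc 1 - u = σ * (f 1 - f t) := heq.symm
        _ ≤ |σ * (f 1 - f t)| := le_abs_self _
        _ = |f 1 - f t| := by rw [abs_mul, hσabs, one_mul]
        _ ≤ L * (1 - t) := h
    have := arith_aux L t u hL ht0 ht1 hu01.1 hu01.2 hb1 hb2
    have heq2 : |f t - (σ * t + f 0)| = |u - t| := by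
      rw [show u - t = σ * (f t - (σ * t + f 0)) by rw [hu]; ring_nf; nlinarith [hσ2],
        abs_mul, hσabs, one_mul]
    rw [heq2]; exact this
  -- reduce to [0,1) by periodicity
  intro x
  have hg : Function.Periodic (fun y => f y - (σ * y + f 0)) 1 := by
    intro y
    simp only [hper y]
    ring
  have hfr : (fun y => f y - (σ * y + f 0)) (Int.fract x) =
      (fun y => f y - (σ * y + f 0)) x := by
    have := hg.sub_int_mul_eq (x := x) ⌊x⌋
    rw [mul_one] at this
    rw [Int.fract]
    exact this
  have h := key (Int.fract x) (Int.fract_nonneg x) (Int.fract_lt_one x).le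
  simp only [hfr] at h
  exact h
end

section
/- Let f : S¹ → S¹ be a homeomorphism which is L-Lipschitz with respect to the geodesic distance d_{S¹}, and let f̃ : ℝ → ℝ be any continuous map with exp ∘ f̃ = f ∘ exp, where exp(θ) = e^{2πiθ}. Then f̃ is L-Lipschitz with respect to the usual distance on ℝ. -/
/-- Geodesic (arc-length) distance on the unit circle `S¹ ⊆ ℂ`
(total circumference `2π`). -/
noncomputable def gdist (z w : Circle) : ℝ := |Complex.arg ((z / w : Circle) : ℂ)|

/-- The map `exp : ℝ → S¹`, `exp θ = e^{2πiθ}`. -/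
noncomputable def expc (θ : ℝ) : Circle := Circle.exp (2 * Real.pi * θ)

lemma expc_div (x y : ℝ) : (expc x / expc y : Circle) = Circle.exp (2 * Real.pi * (x - y)) := by
  unfold expc
  rw [div_eq_iff_eq_mul, ← Circle.exp_add]
  ring_nf

lemma gdist_expc_eq {x y : ℝ} (h : |x - y| ≤ 1/2) :
    gdist (expc x) (expc y) = 2 * Real.pi * |x - y| := by
  have hpi := Real.pi_pos
  unfold gdist
  rw [expc_div]
  set t := 2 * Real.pi * (x - y) with ht
  have habs : |t| = 2 * Real.pi * |x - y| := by
    rw [ht, abs_mul, abs_of_pos (show (0:ℝ) < 2 * Real.pi by positivity)]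
  rw [← habs]
  have htle : |t| ≤ Real.pi := by
    rw [habs]
    calc 2 * Real.pi * |x - y| ≤ 2 * Real.pi * (1/2) :=
          mul_le_mul_of_nonneg_left h (by positivity)
      _ = Real.pi := by ring
  rcases eq_or_lt_of_le (neg_le_of_abs_le htle) with heq | hlt
  · -- t = -π
    have h1 : t = -Real.pi := heq.symm
    have h2 : Circle.exp Real.pi = Circle.exp (-Real.pi) := by
      have := Circle.exp_add_two_pi (-Real.pi)
      rw [show -Real.pi + 2 * Real.pi = Real.pi by ring] at this
      exact this
    rw [h1, ← h2, Circle.arg_exp (by linarith) le_rfl, abs_neg, abs_of_pos hpi]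
  · rw [Circle.arg_exp hlt (le_of_abs_le htle)]

lemma gdist_expc_le (x y : ℝ) : gdist (expc x) (expc y) ≤ 2 * Real.pi * |x - y| := by
  have hpi := Real.pi_pos
  rcases le_or_gt (|x - y|) (1/2) with h | h
  · exact (gdist_expc_eq h).le
  · calc gdist (expc x) (expc y) ≤ Real.pi := Complex.abs_arg_le_pi _
      _ ≤ 2 * Real.pi * |x - y| := by nlinarith

/-- If `f : S¹ → S¹` is a homeomorphism which is `L`-Lipschitz with
respect to the geodesic distance, and `f̃ : ℝ → ℝ` is any continuous lift of `f`
(i.e. `exp ∘ f̃ = f ∘ exp` with `exp θ = e^{2πiθ}`), then `f̃` is `L`-Lipschitz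
with respect to the usual distance on `ℝ`. -/
theorem lift_lipschitz (L : ℝ) (f : Circle ≃ₜ Circle)
    (hlip : ∀ z w : Circle, gdist (f z) (f w) ≤ L * gdist z w)
    (ft : ℝ → ℝ) (hft : Continuous ft)
    (hlift : ∀ θ : ℝ, expc (ft θ) = f (expc θ)) :
    ∀ a b : ℝ, |ft a - ft b| ≤ L * |a - b| := by
  have hpi := Real.pi_pos
  -- L ≥ 0
  have hL : 0 ≤ L := by
    have h1 : gdist (expc 0) (expc (1/2)) = Real.pi := by
      rw [gdist_expc_eq (by norm_num [abs_le])]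
      rw [show (0:ℝ) - 1/2 = -(1/2) by ring, abs_neg, abs_of_pos (by norm_num)]
      ring
    have h2 := hlip (expc 0) (expc (1/2))
    have h3 : 0 ≤ gdist (f (expc 0)) (f (expc (1/2))) := abs_nonneg _
    rw [h1] at h2
    nlinarith
  -- local estimate
  have key : ∀ x y : ℝ, |ft x - ft y| ≤ 1/2 → |ft x - ft y| ≤ L * |x - y| := by
    intro x y h
    have h1 : 2 * Real.pi * |ft x - ft y| = gdist (expc (ft x)) (expc (ft y)) :=
      (gdist_expc_eq h).symm
    have h2 : gdist (expc (ft x)) (expc (ft y)) ≤ L * gdist (expc x) (expc y) := by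
      rw [hlift, hlift]; exact hlip _ _
    have h3 : L * gdist (expc x) (expc y) ≤ L * (2 * Real.pi * |x - y|) :=
      mul_le_mul_of_nonneg_left (gdist_expc_le x y) hL
    nlinarith
  -- main argument
  have main : ∀ a b : ℝ, a ≤ b → |ft a - ft b| ≤ L * |a - b| := by
    intro a b hab
    rcases eq_or_lt_of_le hab with rfl | hlt
    · simp
    have huc : UniformContinuousOn ft (Set.Icc a b) :=
      (isCompact_Icc).uniformContinuousOn_of_continuous hft.continuousOn
    rw [Metric.uniformContinuousOn_iff] at huc
    obtain ⟨δ, hδ, hδ'⟩ := huc (1/2) (by norm_num)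
    obtain ⟨n, hn⟩ := exists_nat_gt ((b - a) / δ)
    have hn0 : 0 < n := by
      have h0 : (0:ℝ) < (b - a) / δ := div_pos (by linarith) hδ
      exact_mod_cast h0.trans hn
    have hn' : (n:ℝ) ≠ 0 := by exact_mod_cast hn0.ne'
    have hnpos : (0:ℝ) < n := by exact_mod_cast hn0
    set c : ℝ := (b - a) / n with hc
    have hc0 : 0 < c := div_pos (by linarith) hnpos
    have hcδ : c < δ := by
      rw [hc, div_lt_iff₀ hnpos]
      rw [div_lt_iff₀ hδ] at hn
      nlinarith [hn]
    have hnc : (n:ℝ) * c = b - a := by rw [hc]; field_simp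
    set x : ℕ → ℝ := fun i => a + i * c with hx
    have hxmem : ∀ i : ℕ, i ≤ n → x i ∈ Set.Icc a b := by
      intro i hi
      have h1 : 0 ≤ (i:ℝ) * c := mul_nonneg (Nat.cast_nonneg i) hc0.le
      have h2 : (i:ℝ) * c ≤ n * c :=
        mul_le_mul_of_nonneg_right (Nat.cast_le.mpr hi) hc0.le
      exact ⟨by simp only [hx]; linarith, by simp only [hx]; linarith⟩
    have hstep : ∀ i : ℕ, i < n → |ft (x (i+1)) - ft (x i)| ≤ L * c := by
      intro i hi
      have hd : x (i+1) - x i = c := by simp only [hx]; push_cast; ring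
      have hda : |x (i+1) - x i| = c := by rw [hd, abs_of_pos hc0]
      have hmem1 := hxmem (i+1) hi
      have hmem2 := hxmem i hi.le
      have hdist : dist (x (i+1)) (x i) < δ := by
        rw [Real.dist_eq, hda]; exact hcδ
      have h12 : |ft (x (i+1)) - ft (x i)| ≤ 1/2 := by
        have := hδ' _ hmem1 _ hmem2 hdist
        rw [Real.dist_eq] at this; linarith
      calc |ft (x (i+1)) - ft (x i)| ≤ L * |x (i+1) - x i| := key _ _ h12
        _ = L * c := by rw [hda]
    have htel : ft b - ft a = ∑ i ∈ Finset.range n, (ft (x (i+1)) - ft (x i)) := by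
      rw [Finset.sum_range_sub (fun i => ft (x i))]
      have hxn : x n = b := by simp only [hx]; linarith
      have hx0 : x 0 = a := by simp [hx]
      rw [hxn, hx0]
    have hfin : |ft b - ft a| ≤ L * (b - a) := by
      rw [htel]
      calc |∑ i ∈ Finset.range n, (ft (x (i+1)) - ft (x i))|
          ≤ ∑ i ∈ Finset.range n, |ft (x (i+1)) - ft (x i)| :=
            Finset.abs_sum_le_sum_abs _ _
        _ ≤ ∑ i ∈ Finset.range n, L * c :=
            Finset.sum_le_sum (fun i hi => hstep i (Finset.mem_range.mp hi))
        _ = n * (L * c) := by rw [Finset.sum_const, Finset.card_range]; ring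
        _ = L * (b - a) := by rw [← hnc]; ring
    have hab2 : |a - b| = b - a := by
      rw [abs_sub_comm]; exact abs_of_pos (by linarith)
    calc |ft a - ft b| = |ft b - ft a| := abs_sub_comm _ _
      _ ≤ L * (b - a) := hfin
      _ = L * |a - b| := by rw [hab2]
  intro a b
  rcases le_total a b with h | h
  · exact main a b h
  · rw [abs_sub_comm (ft a), abs_sub_comm a]; exact main b a h
end

section
/- Let f : S¹ → S¹ be a homeomorphism which is L-Lipschitz (L ≥ 1) with respect to the geodesic distance d_{S¹}. Then there exists an isometry ι of S¹ (a rotation or a reflection) such that sup_{z ∈ S¹} d_{S¹}(f(z), ι(z)) ≤ 2π·(L−1)/L. In other words, d_∞(f, Iso(S¹)) ≤ 2π(L−1)/L, where d_∞(f, g) = sup_{z ∈ S¹} d_{S¹}(f(z), g(z)) and Iso(S¹) is the group of isometries of S¹ for the geodesic metric. -/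
open Real Set


lemma gdist_le_pi (z w : Circle) : gdist z w ≤ Real.pi := Complex.abs_arg_le_pi _

lemma abs_arg_inv (x : ℂ) : |Complex.arg x⁻¹| = |Complex.arg x| := by
  rw [Complex.arg_inv]
  split_ifs with h
  · rw [h]
  · rw [abs_neg]

lemma gdist_comm (z w : Circle) : gdist z w = gdist w z := by
  unfold gdist
  rw [show w / z = (z / w)⁻¹ from (inv_div _ _).symm, Circle.coe_inv, abs_arg_inv]

lemma gdist_inv (z w : Circle) : gdist z⁻¹ w⁻¹ = gdist z w := by
  unfold gdist
  rw [inv_div_inv, show w / z = (z / w)⁻¹ from (inv_div _ _).symm, Circle.coe_inv, abs_arg_inv]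

lemma circle_exp_sum (n : ℕ) (f : ℕ → ℝ) :
    Circle.exp (∑ i ∈ Finset.range n, f i) = ∏ i ∈ Finset.range n, Circle.exp (f i) := by
  induction n with
  | zero => simp
  | succ n ih => rw [Finset.sum_range_succ, Finset.prod_range_succ, Circle.exp_add, ih]

lemma abs_arg_circle_exp_le (t : ℝ) : |Complex.arg (Circle.exp t : ℂ)| ≤ |t| := by
  obtain ⟨m, hm⟩ := Circle.exp_eq_exp.mp (Circle.exp_arg (Circle.exp t))
  have hapi : |Complex.arg (Circle.exp t : ℂ)| ≤ Real.pi := Complex.abs_arg_le_pi _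
  set a := Complex.arg (Circle.exp t : ℂ) with ha
  rcases eq_or_ne m 0 with h0 | h0
  · rw [h0] at hm; simp at hm; rw [hm]
  · have h1 : (1:ℝ) ≤ |(m:ℝ)| := by exact_mod_cast Int.one_le_abs h0
    have hpi := Real.pi_pos
    have h2 : |(m:ℝ) * (2*Real.pi)| - |a| ≤ |(m:ℝ) * (2*Real.pi) - a| :=
      abs_sub_abs_le_abs_sub _ _
    have h3 : |(m:ℝ) * (2*Real.pi) - a| = |t| := by
      rw [show (m:ℝ) * (2*Real.pi) - a = -t by rw [hm]; ring, abs_neg]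
    have h4 : |(m:ℝ) * (2*Real.pi)| = |(m:ℝ)| * (2*Real.pi) := by
      rw [abs_mul, abs_of_pos (by positivity : (0:ℝ) < 2*Real.pi)]
    nlinarith

lemma abs_arg_circle_exp_eq (t : ℝ) (ht : |t| ≤ Real.pi) :
    |Complex.arg (Circle.exp t : ℂ)| = |t| := by
  obtain ⟨m, hm⟩ := Circle.exp_eq_exp.mp (Circle.exp_arg (Circle.exp t))
  have hapi : |Complex.arg (Circle.exp t : ℂ)| ≤ Real.pi := Complex.abs_arg_le_pi _
  set a := Complex.arg (Circle.exp t : ℂ) with ha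
  rcases eq_or_ne m 0 with h0 | h0
  · rw [h0] at hm; simp at hm; rw [hm]
  · have h1 : (1:ℝ) ≤ |(m:ℝ)| := by exact_mod_cast Int.one_le_abs h0
    have hpi := Real.pi_pos
    have h2 : |(m:ℝ) * (2*Real.pi)| - |a| ≤ |(m:ℝ) * (2*Real.pi) - a| :=
      abs_sub_abs_le_abs_sub _ _
    have h2' : |(m:ℝ) * (2*Real.pi)| ≤ |a| + |t| := by
      rw [show (m:ℝ) * (2*Real.pi) = a + -t by rw [hm]; ring]
      exact (abs_add_le _ _).trans (by rw [abs_neg])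
    have h3 : |(m:ℝ) * (2*Real.pi) - a| = |t| := by
      rw [show (m:ℝ) * (2*Real.pi) - a = -t by rw [hm]; ring, abs_neg]
    have h4 : |(m:ℝ) * (2*Real.pi)| = |(m:ℝ)| * (2*Real.pi) := by
      rw [abs_mul, abs_of_pos (by positivity : (0:ℝ) < 2*Real.pi)]
    nlinarith

lemma gdist_exp (s t : ℝ) :
    gdist (Circle.exp s) (Circle.exp t) = |Complex.arg (Circle.exp (s - t) : ℂ)| := by
  rw [gdist, ← Circle.exp_sub]

lemma gdist_exp_le (s t : ℝ) : gdist (Circle.exp s) (Circle.exp t) ≤ |s - t| := by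
  rw [gdist_exp]; exact abs_arg_circle_exp_le _

lemma gdist_exp_eq (s t : ℝ) (h : |s - t| ≤ Real.pi) :
    gdist (Circle.exp s) (Circle.exp t) = |s - t| := by
  rw [gdist_exp]; exact abs_arg_circle_exp_eq _ h

noncomputable def lift5 (g : Circle → Circle) (x : ℝ) : ℝ :=
  Complex.arg (g 1 : ℂ) + ∑ k ∈ Finset.range 5,
    Complex.arg ((g (Circle.exp (((k+1 : ℕ) : ℝ) * x / 5)) / g (Circle.exp ((k : ℝ) * x / 5)) : Circle) : ℂ)

lemma lift5_exp (g : Circle → Circle) (x : ℝ) :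
    Circle.exp (lift5 g x) = g (Circle.exp x) := by
  rw [lift5, Circle.exp_add, circle_exp_sum]
  have : ∀ k ∈ Finset.range 5,
      Circle.exp (Complex.arg ((g (Circle.exp (((k+1 : ℕ) : ℝ) * x / 5)) / g (Circle.exp ((k : ℝ) * x / 5)) : Circle) : ℂ))
      = (fun k : ℕ => g (Circle.exp ((k : ℝ) * x / 5))) (k+1) / (fun k : ℕ => g (Circle.exp ((k : ℝ) * x / 5))) k := by
    intro k _
    rw [Circle.exp_arg]
  rw [Finset.prod_congr rfl this, Finset.prod_range_div (fun k : ℕ => g (Circle.exp ((k : ℝ) * x / 5)))]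
  simp only [Nat.cast_ofNat, Nat.cast_zero, zero_mul, zero_div, Circle.exp_zero]
  rw [Circle.exp_arg, show (5 : ℝ) * x / 5 = x by ring]
  exact mul_div_cancel _ _

lemma lift5_contOn (L : ℝ) (hL1 : 1 ≤ L) (hL2 : L ≤ 2) (g : Circle → Circle)
    (hgc : Continuous g) (hglip : ∀ z w : Circle, gdist (g z) (g w) ≤ L * gdist z w) :
    ContinuousOn (lift5 g) (Icc 0 (2 * Real.pi)) := by
  have hπ := Real.pi_pos
  apply ContinuousOn.add continuousOn_const
  apply continuousOn_finset_sum
  intro k _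
  intro x hx
  apply ContinuousAt.continuousWithinAt
  have hq0 : Continuous (fun x : ℝ =>
      (g (Circle.exp (((k+1 : ℕ) : ℝ) * x / 5)) / g (Circle.exp ((k : ℝ) * x / 5)) : Circle)) := by
    exact (hgc.comp (Circle.exp.continuous.comp (by continuity))).mul
      ((hgc.comp (Circle.exp.continuous.comp (by continuity))).inv)
  have hq : Continuous (fun x : ℝ =>
      ((g (Circle.exp (((k+1 : ℕ) : ℝ) * x / 5)) / g (Circle.exp ((k : ℝ) * x / 5)) : Circle) : ℂ)) :=
    continuous_induced_dom.comp hq0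
  apply (Complex.continuousAt_arg ?_).comp hq.continuousAt
  rw [Complex.mem_slitPlane_iff_arg]
  refine ⟨?_, Circle.coe_ne_zero _⟩
  have h2 : gdist (Circle.exp (((k+1 : ℕ) : ℝ) * x / 5)) (Circle.exp ((k : ℝ) * x / 5)) ≤ x / 5 := by
    have h := gdist_exp_le (((k+1 : ℕ) : ℝ) * x / 5) ((k : ℝ) * x / 5)
    have he : ((k+1 : ℕ) : ℝ) * x / 5 - (k : ℝ) * x / 5 = x / 5 := by push_cast; ring
    rw [he, abs_of_nonneg (by linarith [hx.1] : (0:ℝ) ≤ x / 5)] at h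
    exact h
  have harg : |Complex.arg ((g (Circle.exp (((k+1 : ℕ) : ℝ) * x / 5)) / g (Circle.exp ((k : ℝ) * x / 5)) : Circle) : ℂ)|
      ≤ L * (x / 5) :=
    le_trans (hglip _ _) (mul_le_mul_of_nonneg_left h2 (by linarith))
  intro hpi
  rw [hpi] at harg
  have hx2 : x ≤ 2 * Real.pi := hx.2
  have hx0 : 0 ≤ x := hx.1
  have hP : |Real.pi| = Real.pi := abs_of_pos hπ
  rw [hP] at harg
  nlinarith

lemma loclip (L : ℝ) (hL1 : 1 ≤ L) (g : Circle → Circle)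
    (hglip : ∀ z w : Circle, gdist (g z) (g w) ≤ L * gdist z w)
    (G : ℝ → ℝ) (hGc : ContinuousOn G (Icc 0 (2 * Real.pi)))
    (hGe : ∀ x ∈ Icc 0 (2 * Real.pi), Circle.exp (G x) = g (Circle.exp x)) :
    ∀ x ∈ Icc 0 (2 * Real.pi), ∀ y ∈ Icc 0 (2 * Real.pi),
      |x - y| ≤ Real.pi / (2 * L) → |G x - G y| ≤ L * |x - y| := by
  have hπ := Real.pi_pos
  have hL0 : 0 < L := lt_of_lt_of_le one_pos hL1
  -- main claim for x ≤ y
  have main : ∀ x ∈ Icc 0 (2 * Real.pi), ∀ y ∈ Icc 0 (2 * Real.pi), x ≤ y →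
      y - x ≤ Real.pi / (2 * L) → |G y - G x| ≤ L * (y - x) := by
    intro x hx y hy hxy hd
    have hsub : Icc x y ⊆ Icc 0 (2 * Real.pi) := Icc_subset_Icc hx.1 hy.2
    have key : ∀ t ∈ Icc x y, gdist (Circle.exp (G t)) (Circle.exp (G x)) ≤ L * (t - x) := by
      intro t ht
      rw [hGe t (hsub ht), hGe x hx]
      refine le_trans (hglip _ _) (mul_le_mul_of_nonneg_left ?_ (le_of_lt hL0))
      have := gdist_exp_le t x
      rwa [abs_of_nonneg (by linarith [ht.1] : (0:ℝ) ≤ t - x)] at this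
    have keyhalf : ∀ t ∈ Icc x y, gdist (Circle.exp (G t)) (Circle.exp (G x)) ≤ Real.pi / 2 := by
      intro t ht
      refine le_trans (key t ht) ?_
      have h1 : L * (t - x) ≤ L * (Real.pi / (2 * L)) := by
        apply mul_le_mul_of_nonneg_left _ (le_of_lt hL0)
        linarith [ht.2]
      have h2 : L * (Real.pi / (2 * L)) = Real.pi / 2 := by field_simp
      linarith
    have hne : ∀ t ∈ Icc x y, G t - G x ≠ Real.pi ∧ G t - G x ≠ -Real.pi := by
      intro t ht
      constructor <;> intro heq <;> {
        have h1 : gdist (Circle.exp (G t)) (Circle.exp (G x)) = |G t - G x| :=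
          gdist_exp_eq _ _ (by rw [heq]; simp [abs_of_pos hπ, le_refl])
        have h2 := keyhalf t ht
        rw [h1, heq] at h2
        simp [abs_of_pos hπ] at h2
        linarith
      }
    have hcont : ContinuousOn (fun t => G t - G x) (Icc x y) :=
      (hGc.mono hsub).sub continuousOn_const
    have hbdd : ∀ t ∈ Icc x y, |G t - G x| ≤ Real.pi := by
      intro t ht
      by_contra hcon
      push_neg at hcon
      rcases lt_abs.mp hcon with h | h
      · -- G t - G x > π : IVT gives point with value π
        have h0 : (0:ℝ) = G x - G x := by ring
        have hmem : Real.pi ∈ Icc ((fun t => G t - G x) x) ((fun t => G t - G x) t) := by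
          simp only [sub_self]
          exact ⟨le_of_lt hπ, le_of_lt h⟩
        obtain ⟨s, hs, hval⟩ := intermediate_value_Icc ht.1 (hcont.mono (Icc_subset_Icc le_rfl ht.2)) hmem
        exact (hne s ⟨hs.1, le_trans hs.2 ht.2⟩).1 hval
      · -- G t - G x < -π
        have hmem : -Real.pi ∈ Icc ((fun t => G t - G x) t) ((fun t => G t - G x) x) := by
          simp only [sub_self]
          constructor
          · linarith
          · linarith
        obtain ⟨s, hs, hval⟩ := intermediate_value_Icc' ht.1 (hcont.mono (Icc_subset_Icc le_rfl ht.2)) hmem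
        exact (hne s ⟨hs.1, le_trans hs.2 ht.2⟩).2 hval
    have hy' : y ∈ Icc x y := ⟨hxy, le_rfl⟩
    have h1 : gdist (Circle.exp (G y)) (Circle.exp (G x)) = |G y - G x| :=
      gdist_exp_eq _ _ (hbdd y hy')
    rw [← h1]
    exact key y hy'
  intro x hx y hy hd
  rcases le_total x y with h | h
  · have hxy : |x - y| = y - x := by rw [abs_sub_comm]; exact abs_of_nonneg (by linarith)
    rw [abs_sub_comm (G x) (G y), hxy]
    exact main x hx y hy h (by rw [hxy] at hd; exact hd)
  · have hxy : |x - y| = x - y := abs_of_nonneg (by linarith)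
    rw [hxy]
    exact main y hy x hx h (by rw [hxy] at hd; exact hd)

lemma glolip (L : ℝ) (hL1 : 1 ≤ L) (hL2 : L ≤ 2) (g : Circle → Circle)
    (hglip : ∀ z w : Circle, gdist (g z) (g w) ≤ L * gdist z w)
    (G : ℝ → ℝ) (hGc : ContinuousOn G (Icc 0 (2 * Real.pi)))
    (hGe : ∀ x ∈ Icc 0 (2 * Real.pi), Circle.exp (G x) = g (Circle.exp x)) :
    ∀ x ∈ Icc 0 (2 * Real.pi), ∀ y ∈ Icc 0 (2 * Real.pi), |G x - G y| ≤ L * |x - y| := by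
  have hπ := Real.pi_pos
  have hL0 : 0 < L := lt_of_lt_of_le one_pos hL1
  have main : ∀ n : ℕ, ∀ x ∈ Icc 0 (2 * Real.pi), ∀ y ∈ Icc 0 (2 * Real.pi),
      |x - y| ≤ 2 ^ n * (Real.pi / (2 * L)) → |G x - G y| ≤ L * |x - y| := by
    intro n
    induction n with
    | zero =>
      intro x hx y hy hd
      exact loclip L hL1 g hglip G hGc hGe x hx y hy (by simpa using hd)
    | succ n ih =>
      intro x hx y hy hd
      set z := (x + y) / 2 with hz
      have hzm : z ∈ Icc 0 (2 * Real.pi) := by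
        constructor
        · have := hx.1; have := hy.1; rw [hz]; linarith
        · have := hx.2; have := hy.2; rw [hz]; linarith
      have h1 : |x - z| = |x - y| / 2 := by
        rw [show x - z = (x - y) / 2 by rw [hz]; ring, abs_div]
        norm_num
      have h2 : |z - y| = |x - y| / 2 := by
        rw [show z - y = (x - y) / 2 by rw [hz]; ring, abs_div]
        norm_num
      have hd' : |x - y| / 2 ≤ 2 ^ n * (Real.pi / (2 * L)) := by
        rw [pow_succ] at hd
        linarith
      have e1 := ih x hx z hzm (by rw [h1]; exact hd')
      have e2 := ih z hzm y hy (by rw [h2]; exact hd')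
      calc |G x - G y| ≤ |G x - G z| + |G z - G y| := abs_sub_le _ _ _
        _ ≤ L * |x - z| + L * |z - y| := add_le_add e1 e2
        _ = L * |x - y| := by rw [h1, h2]; ring
  intro x hx y hy
  apply main 4 x hx y hy
  have hb : |x - y| ≤ 2 * Real.pi := by
    rw [abs_le]
    constructor
    · linarith [hx.1, hy.2]
    · linarith [hx.2, hy.1]
  have : (2:ℝ) ^ 4 * (Real.pi / (2 * L)) = 8 * Real.pi / L := by ring
  rw [this]
  have h8 : 2 * Real.pi ≤ 8 * Real.pi / L := by
    rw [le_div_iff₀ hL0]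
    nlinarith
  linarith

/-- If `f : S¹ → S¹` is a homeomorphism which is `L`-Lipschitz
(`L ≥ 1`) with respect to the geodesic distance, then there is an isometry `ι` of `S¹`
(a rotation `z ↦ w * z` or a reflection `z ↦ w * z̄ = w * z⁻¹`) with
`sup_{z} d_{S¹}(f z, ι z) ≤ 2π (L − 1) / L`. -/
theorem homeo_close_to_isometry (L : ℝ) (hL : 1 ≤ L) (f : Circle ≃ₜ Circle)
    (hlip : ∀ z w : Circle, gdist (f z) (f w) ≤ L * gdist z w) :
    ∃ ι : Circle → Circle,
      (∃ w : Circle, (∀ z, ι z = w * z) ∨ (∀ z, ι z = w * z⁻¹)) ∧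
      ∀ z : Circle, gdist (f z) (ι z) ≤ 2 * Real.pi * (L - 1) / L := by
  have hπ := Real.pi_pos
  have hL0 : 0 < L := lt_of_lt_of_le one_pos hL
  by_cases hL2 : 2 ≤ L
  · refine ⟨fun z => z, ⟨1, Or.inl fun z => (one_mul z).symm⟩, fun z => ?_⟩
    have h1 : gdist (f z) z ≤ Real.pi := gdist_le_pi _ _
    have h2 : Real.pi ≤ 2 * Real.pi * (L - 1) / L := by
      rw [le_div_iff₀ hL0]
      nlinarith
    linarith
  push_neg at hL2
  have hL2' : L ≤ 2 := le_of_lt hL2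
  -- the lift of f
  set F := lift5 f with hFdef
  have hFe : ∀ x : ℝ, Circle.exp (F x) = f (Circle.exp x) := lift5_exp f
  have hFc : ContinuousOn F (Icc 0 (2 * Real.pi)) :=
    lift5_contOn L hL hL2' f f.continuous hlip
  have hFlip : ∀ x ∈ Icc 0 (2 * Real.pi), ∀ y ∈ Icc 0 (2 * Real.pi),
      |F x - F y| ≤ L * |x - y| :=
    glolip L hL hL2' f hlip F hFc (fun x _ => hFe x)
  -- injectivity transfer
  have hinj : ∀ x y : ℝ, Circle.exp (F x) = Circle.exp (F y) → ∃ m : ℤ, x = y + m * (2 * Real.pi) := by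
    intro x y h
    rw [hFe, hFe] at h
    exact Circle.exp_eq_exp.mp (f.injective h)
  -- degree
  obtain ⟨d, hd⟩ : ∃ d : ℤ, F (2 * Real.pi) = F 0 + d * (2 * Real.pi) := by
    apply Circle.exp_eq_exp.mp
    rw [hFe, hFe, Circle.exp_two_pi, Circle.exp_zero]
  have hd1 : d = 1 ∨ d = -1 := by
    by_contra hcon
    push_neg at hcon
    obtain ⟨hne1, hnem1⟩ := hcon
    have h0m : (0:ℝ) ∈ Icc 0 (2 * Real.pi) := ⟨le_rfl, by linarith⟩
    have h2m : (2 * Real.pi) ∈ Icc 0 (2 * Real.pi) := ⟨by linarith, le_rfl⟩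
    rcases lt_trichotomy d 0 with hneg | h0 | hpos
    · -- d ≤ -2
      have hd2 : d ≤ -2 := by omega
      have hd2' : (d : ℝ) ≤ -2 := by exact_mod_cast hd2
      have hsub : F 0 - 2 * Real.pi ∈ Icc (F (2 * Real.pi)) (F 0) := by
        constructor
        · rw [hd]; nlinarith
        · linarith
      obtain ⟨x, hx, hFx⟩ := intermediate_value_Icc' (by linarith : (0:ℝ) ≤ 2 * Real.pi) hFc hsub
      have hexp : Circle.exp (F x) = Circle.exp (F 0) := by
        rw [hFx, Circle.exp_sub_two_pi]
      obtain ⟨m, hm⟩ := hinj x 0 hexp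
      rw [zero_add] at hm
      -- x ∈ [0, 2π] so m = 0 or m = 1, both contradictions
      have hm0 : 0 ≤ (m:ℝ) * (2 * Real.pi) := by rw [← hm]; exact hx.1
      have hm1 : (m:ℝ) * (2 * Real.pi) ≤ 2 * Real.pi := by rw [← hm]; exact hx.2
      have hmz : m = 0 ∨ m = 1 := by
        have t0 : (0:ℝ) ≤ (m:ℝ) := by nlinarith
        have t1 : (m:ℝ) ≤ 1 := by nlinarith
        have t0' : (0:ℤ) ≤ m := by exact_mod_cast t0
        have t1' : m ≤ 1 := by exact_mod_cast t1
        omega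
      rcases hmz with h | h
      · rw [h] at hm; simp at hm
        rw [hm] at hFx
        linarith
      · rw [h] at hm; simp at hm
        rw [hm] at hFx
        rw [hd] at hFx
        have hdd : (d:ℝ) * (2 * Real.pi) = (-1) * (2 * Real.pi) := by linarith
        have h2 : (d:ℝ) = -1 := mul_right_cancel₀ (by positivity) hdd
        exact hnem1 (by exact_mod_cast h2)
    · -- d = 0 : F (2π) = F 0
      have hFper : F (2 * Real.pi) = F 0 := by rw [hd, h0]; simp
      by_cases hc : ∀ p ∈ Icc 0 (2 * Real.pi), F p = F 0
      · have hπm : Real.pi ∈ Icc 0 (2 * Real.pi) := ⟨le_of_lt hπ, by linarith⟩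
        have h1 : Circle.exp (F Real.pi) = Circle.exp (F 0) := by rw [hc Real.pi hπm]
        obtain ⟨m, hm⟩ := hinj Real.pi 0 h1
        rw [zero_add] at hm
        rcases eq_or_ne m 0 with h | h
        · rw [h] at hm; simp at hm
        · have h1' : (1:ℝ) ≤ |(m:ℝ)| := by exact_mod_cast Int.one_le_abs h
          have : |Real.pi| = |(m:ℝ)| * |2 * Real.pi| := by rw [← abs_mul, ← hm]
          rw [abs_of_pos hπ, abs_of_pos (by linarith : (0:ℝ) < 2 * Real.pi)] at this
          nlinarith
      · push_neg at hc
        obtain ⟨p, hp, hFp⟩ := hc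
        have endgame : ∀ x₁ x₂ : ℝ, 0 ≤ x₁ → x₁ < x₂ → x₂ < 2 * Real.pi →
            F x₁ = F x₂ → False := by
          intro x₁ x₂ h1 h2 h3 heq
          obtain ⟨m, hm⟩ := hinj x₂ x₁ (by rw [heq])
          have t0 : (0:ℝ) < (m:ℝ) * (2 * Real.pi) := by rw [← sub_eq_iff_eq_add'] at hm; rw [← hm]; linarith
          have t1 : (m:ℝ) * (2 * Real.pi) < 2 * Real.pi := by rw [← sub_eq_iff_eq_add'] at hm; rw [← hm]; linarith
          have u0 : (0:ℝ) < (m:ℝ) := by nlinarith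
          have u1 : (m:ℝ) < 1 := by nlinarith
          have u0' : (0:ℤ) < m := by exact_mod_cast u0
          have u1' : m < 1 := by exact_mod_cast u1
          omega
        rcases hFp.lt_or_gt with hlt | hlt
        · -- F p < F 0
          set v := (F p + F 0) / 2 with hv
          have hv1 : F p < v := by rw [hv]; linarith
          have hv2 : v < F 0 := by rw [hv]; linarith
          obtain ⟨x₁, hx₁, hvx₁⟩ := intermediate_value_Icc' hp.1
            (hFc.mono (Icc_subset_Icc le_rfl hp.2)) ⟨le_of_lt hv1, le_of_lt hv2⟩
          obtain ⟨x₂, hx₂, hvx₂⟩ := intermediate_value_Icc hp.2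
            (hFc.mono (Icc_subset_Icc hp.1 le_rfl)) ⟨le_of_lt hv1, by rw [hFper]; exact le_of_lt hv2⟩
          have hx₁p : x₁ < p := lt_of_le_of_ne hx₁.2 (by intro h; rw [h] at hvx₁; linarith)
          have hx₂p : p < x₂ := lt_of_le_of_ne hx₂.1 (by intro h; rw [← h] at hvx₂; linarith)
          have hx₂2 : x₂ < 2 * Real.pi := lt_of_le_of_ne hx₂.2 (by intro h; rw [h, hFper] at hvx₂; linarith)
          exact endgame x₁ x₂ hx₁.1 (lt_trans hx₁p hx₂p) hx₂2 (by rw [hvx₁, hvx₂])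
        · -- F 0 < F p
          set v := (F 0 + F p) / 2 with hv
          have hv1 : F 0 < v := by rw [hv]; linarith
          have hv2 : v < F p := by rw [hv]; linarith
          obtain ⟨x₁, hx₁, hvx₁⟩ := intermediate_value_Icc hp.1
            (hFc.mono (Icc_subset_Icc le_rfl hp.2)) ⟨le_of_lt hv1, le_of_lt hv2⟩
          obtain ⟨x₂, hx₂, hvx₂⟩ := intermediate_value_Icc' hp.2
            (hFc.mono (Icc_subset_Icc hp.1 le_rfl)) ⟨by rw [hFper]; exact le_of_lt hv1, le_of_lt hv2⟩
          have hx₁p : x₁ < p := lt_of_le_of_ne hx₁.2 (by intro h; rw [h] at hvx₁; linarith)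
          have hx₂p : p < x₂ := lt_of_le_of_ne hx₂.1 (by intro h; rw [← h] at hvx₂; linarith)
          have hx₂2 : x₂ < 2 * Real.pi := lt_of_le_of_ne hx₂.2 (by intro h; rw [h, hFper] at hvx₂; linarith)
          exact endgame x₁ x₂ hx₁.1 (lt_trans hx₁p hx₂p) hx₂2 (by rw [hvx₁, hvx₂])
    · -- d ≥ 2
      have hd2 : 2 ≤ d := by omega
      have hd2' : (2:ℝ) ≤ (d : ℝ) := by exact_mod_cast hd2
      have hsub : F 0 + 2 * Real.pi ∈ Icc (F 0) (F (2 * Real.pi)) := by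
        constructor
        · linarith
        · rw [hd]; nlinarith
      obtain ⟨x, hx, hFx⟩ := intermediate_value_Icc (by linarith : (0:ℝ) ≤ 2 * Real.pi) hFc hsub
      have hexp : Circle.exp (F x) = Circle.exp (F 0) := by
        rw [hFx, Circle.exp_add_two_pi]
      obtain ⟨m, hm⟩ := hinj x 0 hexp
      rw [zero_add] at hm
      have hm0 : 0 ≤ (m:ℝ) * (2 * Real.pi) := by rw [← hm]; exact hx.1
      have hm1 : (m:ℝ) * (2 * Real.pi) ≤ 2 * Real.pi := by rw [← hm]; exact hx.2
      have hmz : m = 0 ∨ m = 1 := by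
        have t0 : (0:ℝ) ≤ (m:ℝ) := by nlinarith
        have t1 : (m:ℝ) ≤ 1 := by nlinarith
        have t0' : (0:ℤ) ≤ m := by exact_mod_cast t0
        have t1' : m ≤ 1 := by exact_mod_cast t1
        omega
      rcases hmz with h | h
      · rw [h] at hm; simp at hm
        rw [hm] at hFx
        linarith
      · rw [h] at hm; simp at hm
        rw [hm] at hFx
        rw [hd] at hFx
        have hdd : (d:ℝ) * (2 * Real.pi) = 1 * (2 * Real.pi) := by linarith
        have h2 : (d:ℝ) = 1 := mul_right_cancel₀ (by positivity) hdd
        exact hne1 (by exact_mod_cast h2)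
  -- package g, G according to orientation
  obtain ⟨g, G, hGc, hGe, hGper, hGlip, hlink⟩ :
      ∃ (g : Circle → Circle) (G : ℝ → ℝ),
        ContinuousOn G (Icc 0 (2 * Real.pi)) ∧
        (∀ x ∈ Icc 0 (2 * Real.pi), Circle.exp (G x) = g (Circle.exp x)) ∧
        G (2 * Real.pi) = G 0 + 2 * Real.pi ∧
        (∀ x ∈ Icc 0 (2 * Real.pi), ∀ y ∈ Icc 0 (2 * Real.pi), |G x - G y| ≤ L * |x - y|) ∧
        ((∀ z, g z = f z) ∨ (∀ z, g z = f z⁻¹)) := by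
    rcases hd1 with h1 | h1
    · refine ⟨f, F, hFc, fun x _ => hFe x, ?_, hFlip, Or.inl fun z => rfl⟩
      rw [hd, h1]; push_cast; ring
    · refine ⟨fun z => f z⁻¹, fun x => F (2 * Real.pi - x), ?_, ?_, ?_, ?_, Or.inr fun z => rfl⟩
      · apply hFc.comp ((continuous_const.sub continuous_id).continuousOn)
        intro x hx
        have hmem : (2 * Real.pi - x) ∈ Icc 0 (2 * Real.pi) := ⟨by linarith [hx.2], by linarith [hx.1]⟩
        simpa using hmem
      · intro x hx
        rw [hFe]
        congr 1
        rw [show 2 * Real.pi - x = -x + 2 * Real.pi by ring, Circle.exp_add_two_pi, Circle.exp_neg]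
      · show F (2 * Real.pi - 2 * Real.pi) = F (2 * Real.pi - 0) + 2 * Real.pi
        rw [sub_self, sub_zero, hd, h1]; push_cast; ring
      · intro x hx y hy
        have h := hFlip (2 * Real.pi - x) ⟨by linarith [hx.2], by linarith [hx.1]⟩
          (2 * Real.pi - y) ⟨by linarith [hy.2], by linarith [hy.1]⟩
        rw [show (2 * Real.pi - x) - (2 * Real.pi - y) = -(x - y) by ring, abs_neg] at h
        exact h
  -- max and min of G x - x
  have hne2 : (Icc (0:ℝ) (2 * Real.pi)).Nonempty := ⟨0, ⟨le_rfl, by linarith⟩⟩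
  have hu : ContinuousOn (fun x => G x - x) (Icc 0 (2 * Real.pi)) := hGc.sub continuousOn_id
  obtain ⟨p, hp, hpmax⟩ := isCompact_Icc.exists_isMaxOn hne2 hu
  obtain ⟨q, hq, hqmin⟩ := isCompact_Icc.exists_isMinOn hne2 hu
  set c := ((G p - p) + (G q - q)) / 2 with hc
  -- oscillation bound
  have hub : ∀ x ∈ Icc 0 (2 * Real.pi), ∀ y ∈ Icc 0 (2 * Real.pi),
      (G x - x) - (G y - y) ≤ (L - 1) * (2 * Real.pi) := by
    intro x hx y hy
    rcases le_total y x with h | h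
    · have h1 := hGlip x hx y hy
      rw [abs_of_nonneg (by linarith : (0:ℝ) ≤ x - y)] at h1
      have h2 : G x - G y ≤ L * (x - y) := le_trans (le_abs_self _) h1
      nlinarith [hx.2, hy.1]
    · have h0m : (0:ℝ) ∈ Icc 0 (2*Real.pi) := ⟨le_rfl, by linarith⟩
      have h2m : (2*Real.pi) ∈ Icc 0 (2*Real.pi) := ⟨by linarith, le_rfl⟩
      have h1 := hGlip x hx 0 h0m
      rw [sub_zero, abs_of_nonneg (hx.1 : (0:ℝ) ≤ x)] at h1
      have h1' : G x - G 0 ≤ L * x := le_trans (le_abs_self _) h1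
      have h2 := hGlip (2*Real.pi) h2m y hy
      rw [abs_of_nonneg (by linarith [hy.2] : (0:ℝ) ≤ 2*Real.pi - y)] at h2
      have h2' : G (2*Real.pi) - G y ≤ L * (2*Real.pi - y) := le_trans (le_abs_self _) h2
      rw [hGper] at h2'
      nlinarith [hx.1, hy.2]
  -- the estimate
  have est : ∀ z : Circle, gdist (g z) (Circle.exp c * z) ≤ 2 * Real.pi * (L - 1) / L := by
    intro z
    set x := if 0 ≤ Complex.arg (z : ℂ) then Complex.arg (z:ℂ) else Complex.arg (z:ℂ) + 2 * Real.pi with hx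
    have hxm : x ∈ Icc 0 (2 * Real.pi) := by
      rw [hx]
      split_ifs with h
      · exact ⟨h, by linarith [Complex.arg_le_pi (z:ℂ)]⟩
      · push_neg at h
        exact ⟨by linarith [Complex.neg_pi_lt_arg (z:ℂ)], by linarith⟩
    have hxz : Circle.exp x = z := by
      rw [hx]
      split_ifs with h
      · exact Circle.exp_arg z
      · rw [Circle.exp_add_two_pi]; exact Circle.exp_arg z
    have h1 : gdist (g z) (Circle.exp c * z) = gdist (Circle.exp (G x)) (Circle.exp (c + x)) := by
      rw [← hxz, ← hGe x hxm, ← Circle.exp_add]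
    rw [h1]
    have h2 := gdist_exp_le (G x) (c + x)
    have hmax : G x - x ≤ G p - p := isMaxOn_iff.mp hpmax x hxm
    have hmin : G q - q ≤ G x - x := isMinOn_iff.mp hqmin x hxm
    have hosc := hub p hp q hq
    have h3 : |G x - (c + x)| ≤ Real.pi * (L - 1) := by
      rw [abs_le, hc]
      constructor
      · linarith
      · linarith
    have h4 : Real.pi * (L - 1) ≤ 2 * Real.pi * (L - 1) / L := by
      rw [le_div_iff₀ hL0]
      nlinarith
    linarith
  rcases hlink with hg | hg
  · refine ⟨fun z => Circle.exp c * z, ⟨Circle.exp c, Or.inl fun z => rfl⟩, fun z => ?_⟩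
    have h := est z
    rw [hg z] at h
    exact h
  · refine ⟨fun z => Circle.exp c * z⁻¹, ⟨Circle.exp c, Or.inr fun z => rfl⟩, fun z => ?_⟩
    have h := est z⁻¹
    rw [hg z⁻¹, inv_inv] at h
    exact h
end

section
/- Let v_0, v_1, …, v_n ∈ S¹ be points with ‖v_j − v_0‖ < √2 (Euclidean norm) for all j, and let w_0, …, w_n ≥ 0 be weights with Σ_j w_j = 1. Then the function m ↦ Σ_j w_j · d_{S¹}(m, v_j)² on S¹ attains its minimum at exactly one point; that is, the set {v_j} has a unique weighted Karcher mean with respect to the geodesic distance on S¹ (for any such weights). -/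
/-!
Rotate so that `v 0 = 1` and write `v j = exp (i θ_j)` with `|θ_j| < π / 2`, and a candidate
point as `exp (i t)`. Each geodesic distance is `|t - (θ_j + 2π k_j)|` for some integers `k_j`,
so the objective is `(t - mean)² + ½ ∑ w_i w_j (φ_i - φ_j)²` for the lifted angles
`φ_j = θ_j + 2π k_j`. As `|θ_i - θ_j| < π`, shifting a difference by a nonzero multiple of `2π`
strictly increases its square; hence the objective is at least the weighted variance of the
`θ_j`, with equality only when `t ≡ ∑ w_j θ_j (mod 2π)`.
-/

open Real Finset

theorem sq_sub_lt_sq_sub_of_lift {p a b : ℝ} (hab : |a - b| < p / 2) {m n : ℤ} (hmn : m ≠ n) :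
    (a - b) ^ 2 < (a + m * p - (b + n * p)) ^ 2 := by
  obtain ⟨hl, hr⟩ := abs_lt.mp hab
  rw [← sub_pos, show (a + m * p - (b + n * p)) ^ 2 - (a - b) ^ 2 =
    ((m - n) * p) * (2 * (a - b) + (m - n) * p) by ring]
  rcases lt_or_gt_of_ne hmn with hlt | hgt
  · have : (m : ℝ) - n ≤ -1 := by exact_mod_cast Int.le_sub_one_of_lt (sub_neg.mpr hlt)
    exact mul_pos_of_neg_of_neg (by nlinarith) (by nlinarith)
  · have : (1 : ℝ) ≤ m - n := by exact_mod_cast Int.sub_pos_of_lt hgt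
    exact mul_pos (by nlinarith) (by nlinarith)

theorem sq_sub_le_sq_sub_of_lift {p a b : ℝ} (hab : |a - b| < p / 2) (m n : ℤ) :
    (a - b) ^ 2 ≤ (a + m * p - (b + n * p)) ^ 2 := by
  rcases eq_or_ne m n with rfl | hmn
  · rw [add_sub_add_right_eq_sub]
  · exact (sq_sub_lt_sq_sub_of_lift hab hmn).le

section Lifts

variable {ι : Type*} [Fintype ι]

def pairwiseSqDist (w x : ι → ℝ) : ℝ := ∑ i, ∑ j, w i * w j * (x i - x j) ^ 2

variable {w θ : ι → ℝ} {p : ℝ}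

theorem sum_mul_sq_sub_eq (hws : ∑ j, w j = 1) (x : ι → ℝ) (t : ℝ) :
    ∑ j, w j * (t - x j) ^ 2 = (t - ∑ j, w j * x j) ^ 2 + pairwiseSqDist w x / 2 := by
  have hpair : ∀ i j, w i * w j * (x i - x j) ^ 2 =
      w j * (w i * x i ^ 2) + w i * (w j * x j ^ 2) - 2 * (w i * x i) * (w j * x j) :=
    fun i j => by ring
  have hsingle : ∀ j, w j * (t - x j) ^ 2 = t ^ 2 * w j - 2 * t * (w j * x j) + w j * x j ^ 2 :=
    fun j => by ring
  simp only [pairwiseSqDist, hpair, hsingle, sum_add_distrib, sum_sub_distrib, ← mul_sum,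
    ← sum_mul, hws]
  ring

theorem pairwiseSqDist_le_of_lift (hw : ∀ j, 0 ≤ w j) (hθ : ∀ i j, |θ i - θ j| < p / 2)
    (k : ι → ℤ) : pairwiseSqDist w θ ≤ pairwiseSqDist w (fun j => θ j + k j * p) :=
  sum_le_sum fun i _ => sum_le_sum fun j _ => mul_le_mul_of_nonneg_left
    (sq_sub_le_sq_sub_of_lift (hθ i j) _ _) (mul_nonneg (hw i) (hw j))

theorem pairwiseSqDist_lt_of_lift (hw : ∀ j, 0 ≤ w j) (hθ : ∀ i j, |θ i - θ j| < p / 2)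
    {k : ι → ℤ} {i j : ι} (hi : 0 < w i) (hj : 0 < w j) (hk : k i ≠ k j) :
    pairwiseSqDist w θ < pairwiseSqDist w (fun j => θ j + k j * p) := by
  have hle : ∀ i' j', w i' * w j' * (θ i' - θ j') ^ 2 ≤
      w i' * w j' * (θ i' + k i' * p - (θ j' + k j' * p)) ^ 2 := fun i' j' =>
    mul_le_mul_of_nonneg_left (sq_sub_le_sq_sub_of_lift (hθ i' j') _ _)
      (mul_nonneg (hw i') (hw j'))
  refine sum_lt_sum (fun i' _ => sum_le_sum fun j' _ => hle i' j') ⟨i, mem_univ _, ?_⟩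
  refine sum_lt_sum (fun j' _ => hle i j') ⟨j, mem_univ _, ?_⟩
  exact mul_lt_mul_of_pos_left (sq_sub_lt_sq_sub_of_lift (hθ i j) hk) (mul_pos hi hj)

theorem sum_mul_sq_sub_le_of_lift (hw : ∀ j, 0 ≤ w j) (hws : ∑ j, w j = 1)
    (hθ : ∀ i j, |θ i - θ j| < p / 2) (k : ι → ℤ) (t : ℝ) :
    ∑ j, w j * (∑ i, w i * θ i - θ j) ^ 2 ≤ ∑ j, w j * (t - (θ j + k j * p)) ^ 2 := by
  rw [sum_mul_sq_sub_eq hws, sum_mul_sq_sub_eq hws, sub_self]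
  have := pairwiseSqDist_le_of_lift hw hθ k
  nlinarith [sq_nonneg (t - ∑ j, w j * (θ j + k j * p))]

theorem exists_eq_add_int_mul_of_sum_mul_sq_sub_le (hw : ∀ j, 0 ≤ w j) (hws : ∑ j, w j = 1)
    (hθ : ∀ i j, |θ i - θ j| < p / 2) (k : ι → ℤ) (t : ℝ)
    (h : ∑ j, w j * (t - (θ j + k j * p)) ^ 2 ≤ ∑ j, w j * (∑ i, w i * θ i - θ j) ^ 2) :
    ∃ c : ℤ, t = ∑ i, w i * θ i + c * p := by
  rw [sum_mul_sq_sub_eq hws, sum_mul_sq_sub_eq hws, sub_self] at h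
  have hle := pairwiseSqDist_le_of_lift hw hθ k
  have hsq := sq_nonneg (t - ∑ j, w j * (θ j + k j * p))
  have ht : t = ∑ j, w j * (θ j + k j * p) := by nlinarith
  have hpair : pairwiseSqDist w (fun j => θ j + k j * p) ≤ pairwiseSqDist w θ := by linarith
  obtain ⟨j₀, -, hj₀⟩ : ∃ j ∈ univ, (0 : ι → ℝ) j < w j :=
    exists_lt_of_sum_lt (by simp [hws])
  have hk : ∀ j, w j * k j = w j * k j₀ := by
    intro j
    rcases (hw j).eq_or_lt with hj | hj
    · simp [← hj]
    · by_contra hne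
      exact (pairwiseSqDist_lt_of_lift hw hθ hj hj₀ fun h => hne (by rw [h])).not_ge hpair
  refine ⟨k j₀, ?_⟩
  rw [ht]
  simp only [mul_add, sum_add_distrib, ← mul_assoc, hk, ← sum_mul, hws, one_mul]

end Lifts

theorem mul_exp_arg_div (z a : Circle) : a * Circle.exp (Complex.arg (z / a : Circle)) = z := by
  rw [Circle.exp_arg, mul_div_cancel]

theorem gdist_mul_exp (a : Circle) (s t : ℝ) :
    gdist (a * Circle.exp s) (a * Circle.exp t) = |Complex.arg (Circle.exp (s - t))| := by
  rw [gdist, Circle.exp_sub, mul_div_mul_left_eq_div]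

theorem gdist_mul_exp_of_abs_lt (a : Circle) {s t : ℝ} (h : |s - t| < π) :
    gdist (a * Circle.exp s) (a * Circle.exp t) = |s - t| := by
  obtain ⟨hl, hr⟩ := abs_lt.mp h
  rw [gdist_mul_exp, Circle.arg_exp hl hr.le]

theorem exists_gdist_mul_exp_eq (z a : Circle) (t : ℝ) :
    ∃ k : ℤ, gdist z (a * Circle.exp t) = |Complex.arg (z / a : Circle) - (t + k * (2 * π))| := by
  obtain ⟨m, hm⟩ :=
    Circle.exp_eq_exp.mp (Circle.exp_arg (Circle.exp (Complex.arg (z / a : Circle) - t)))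
  refine ⟨-m, ?_⟩
  conv_lhs => rw [← mul_exp_arg_div z a, gdist_mul_exp, hm]
  push_cast
  ring_nf

theorem abs_arg_lt_pi_div_two_of_norm_sub_one_lt (u : Circle)
    (h : ‖(u : ℂ) - 1‖ < √2) : |Complex.arg u| < π / 2 := by
  have hsq : ‖(u : ℂ) - 1‖ ^ 2 = 2 - 2 * (u : ℂ).re := by
    have := Circle.normSq_coe u
    rw [Complex.normSq_apply] at this
    rw [Complex.sq_norm, Complex.normSq_apply]
    simp only [Complex.sub_re, Complex.one_re, Complex.sub_im, Complex.one_im, sub_zero]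
    linarith
  have h2 : ‖(u : ℂ) - 1‖ ^ 2 < 2 := (lt_sqrt (norm_nonneg _)).mp h
  exact Complex.abs_arg_lt_pi_div_two_iff.mpr (Or.inl (by linarith))

theorem existsUnique_karcherMean_of_abs_sub_lt {ι : Type*} [Fintype ι] (a : Circle)
    {θ w : ι → ℝ} (hθ : ∀ i j, |θ i - θ j| < π) (hw : ∀ j, 0 ≤ w j) (hws : ∑ j, w j = 1) :
    ∃! m : Circle, ∀ m' : Circle,
      ∑ j, w j * gdist m (a * Circle.exp (θ j)) ^ 2 ≤
        ∑ j, w j * gdist m' (a * Circle.exp (θ j)) ^ 2 := by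
  have hθ' : ∀ i j, |θ i - θ j| < 2 * π / 2 := by simpa using hθ
  set μ := ∑ i, w i * θ i
  have hμ : ∀ j, |μ - θ j| < π := fun j => by
    have := (convex_Ioo (-π) π).sum_mem (fun i _ => hw i) hws
      (fun i _ => abs_lt.mp (hθ i j))
    simpa [abs_lt, smul_eq_mul, mul_sub, sum_sub_distrib, ← sum_mul, hws] using this
  have hFμ : ∑ j, w j * gdist (a * Circle.exp μ) (a * Circle.exp (θ j)) ^ 2 =
      ∑ j, w j * (μ - θ j) ^ 2 := by
    simp only [gdist_mul_exp_of_abs_lt a (hμ _), sq_abs]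
  have hF : ∀ m' : Circle, ∃ k : ι → ℤ, ∑ j, w j * gdist m' (a * Circle.exp (θ j)) ^ 2 =
      ∑ j, w j * (Complex.arg (m' / a : Circle) - (θ j + k j * (2 * π))) ^ 2 := by
    intro m'
    choose k hk using fun j => exists_gdist_mul_exp_eq m' a (θ j)
    exact ⟨k, by simp only [hk, sq_abs]⟩
  refine ⟨a * Circle.exp μ, fun m' => ?_, fun m' hm' => ?_⟩
  · obtain ⟨k, hk⟩ := hF m'
    rw [hFμ, hk]
    exact sum_mul_sq_sub_le_of_lift hw hws hθ' k _
  · obtain ⟨k, hk⟩ := hF m'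
    have hle := hm' (a * Circle.exp μ)
    rw [hFμ, hk] at hle
    obtain ⟨c, hc⟩ := exists_eq_add_int_mul_of_sum_mul_sq_sub_le hw hws hθ' k _ hle
    rw [← mul_exp_arg_div m' a, hc, Circle.exp_eq_exp.mpr ⟨c, rfl⟩]

/-- If `v 0, …, v n ∈ S¹` satisfy `‖v j − v 0‖ < √2` (Euclidean norm)
for all `j`, and `w 0, …, w n ≥ 0` are weights summing to `1`, then the function
`m ↦ ∑ j, w j * d_{S¹}(m, v j)²` attains its minimum on `S¹` at exactly one point:
the points have a unique weighted Karcher mean for the geodesic distance. -/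
theorem unique_karcher_mean (n : ℕ) (v : Fin (n + 1) → Circle)
    (hv : ∀ j, ‖(v j : ℂ) - (v 0 : ℂ)‖ < Real.sqrt 2)
    (w : Fin (n + 1) → ℝ) (hw : ∀ j, 0 ≤ w j) (hws : ∑ j, w j = 1) :
    ∃! m : Circle, ∀ m' : Circle,
      ∑ j, w j * gdist m (v j) ^ 2 ≤ ∑ j, w j * gdist m' (v j) ^ 2 := by
  set θ : Fin (n + 1) → ℝ := fun j => Complex.arg (v j / v 0 : Circle)
  have hvθ : ∀ j, v 0 * Circle.exp (θ j) = v j := fun j => mul_exp_arg_div (v j) (v 0)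
  have hθ : ∀ j, |θ j| < π / 2 := fun j => by
    refine abs_arg_lt_pi_div_two_of_norm_sub_one_lt _ ?_
    rw [Circle.coe_div, ← div_self (Circle.coe_ne_zero (v 0)), ← sub_div, norm_div,
      Circle.norm_coe, div_one]
    exact hv j
  have hθθ : ∀ i j, |θ i - θ j| < π := fun i j =>
    (abs_sub _ _).trans_lt (by linarith [hθ i, hθ j])
  simpa only [hvθ] using existsUnique_karcherMean_of_abs_sub_lt (v 0) hθθ hw hws
end

section
/- Let π : X → B be a map of sets, {U_j}_{j ∈ J} a family of subsets of B, f_j : π⁻¹(U_j) → S¹ maps, ε > 0 and 0 ≤ δ < 1. Suppose (Ω_{jk}) is a family of matrices in O(2), indexed by pairs (j,k) with U_j ∩ U_k ≠ ∅, such that ‖f_j(x) − Ω_{jk} f_k(x)‖ < ε for every x ∈ π⁻¹(U_j ∩ U_k); and suppose that for every triple (j,k,l) with U_j ∩ U_k ∩ U_l ≠ ∅, the Hausdorff distance (with respect to the Euclidean metric on ℝ²) between f_l(π⁻¹(U_j ∩ U_k ∩ U_l)) and S¹ is strictly less than δ. Then for every such triple (j,k,l), ‖Ω_{jk}·Ω_{kl}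 − Ω_{jl}‖_F < 3√2 · ε/(1−δ). -/
/-! On the triple intersection, `T = Ω_jk Ω_kl - Ω_jl` moves each point `f_l x` by less than `3ε`:
split `T (f_l x)` into three errors of the witness, one of them transported by the isometry
`Ω_jk`. These points are `δ`-dense in the unit circle, so `‖T u‖ < 3ε + δ ‖T‖` for every unit
vector `u`. Hence `‖T‖ ≤ 3ε / (1 - δ)`, then `‖T u‖ < 3ε / (1 - δ)` for unit `u`; applied to the
two basis vectors this bounds both columns of `T`, and the Frobenius norm picks up a factor `√2`. -/

noncomputable def frobeniusNorm (A : Matrix (Fin 2) (Fin 2) ℝ) : ℝ :=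
  Real.sqrt (∑ i, ∑ j, (A i j) ^ 2)

open Matrix Metric

section OpNorm

variable {𝕜 E F : Type*} [NontriviallyNormedField 𝕜] [NormedAddCommGroup E] [NormedSpace 𝕜 E]
  [NormedAddCommGroup F] [NormedSpace 𝕜 F] {T : E →L[𝕜] F} {S : Set E} {C δ : ℝ}

theorem ContinuousLinearMap.norm_apply_lt_add_of_mem_thickening
    (hS : ∀ v ∈ S, ‖T v‖ < C) {u : E} (hu : u ∈ thickening δ S) :
    ‖T u‖ < C + δ * ‖T‖ := by
  obtain ⟨v, hv, huv⟩ := mem_thickening_iff.mp hu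
  calc ‖T u‖ = ‖T v + T (u - v)‖ := by rw [map_sub, add_sub_cancel]
    _ ≤ ‖T v‖ + ‖T‖ * ‖u - v‖ := norm_add_le_of_le le_rfl (T.le_opNorm _)
    _ < C + δ * ‖T‖ := by
      rw [← dist_eq_norm, mul_comm δ]
      exact add_lt_add_of_lt_of_le (hS v hv) (by gcongr)

end OpNorm

section RealOpNorm

variable {E F : Type*} [NormedAddCommGroup E] [NormedSpace ℝ E]
  [NormedAddCommGroup F] [NormedSpace ℝ F] {T : E →L[ℝ] F} {S : Set E} {C δ : ℝ}

theorem ContinuousLinearMap.opNorm_le_div_of_sphere_subset_thickening (hC : 0 ≤ C)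
    (hδ0 : 0 ≤ δ) (hδ1 : δ < 1) (hS : ∀ v ∈ S, ‖T v‖ < C)
    (hsub : sphere 0 1 ⊆ thickening δ S) : ‖T‖ ≤ C / (1 - δ) := by
  have hle : ‖T‖ ≤ C + δ * ‖T‖ :=
    T.opNorm_le_of_unit_norm (by positivity) fun u hu =>
      (T.norm_apply_lt_add_of_mem_thickening hS (hsub (mem_sphere_zero_iff_norm.mpr hu))).le
  rw [le_div_iff₀ (by linarith)]
  linarith

theorem ContinuousLinearMap.norm_apply_lt_div_of_sphere_subset_thickening (hC : 0 ≤ C)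
    (hδ0 : 0 ≤ δ) (hδ1 : δ < 1) (hS : ∀ v ∈ S, ‖T v‖ < C)
    (hsub : sphere 0 1 ⊆ thickening δ S) {u : E} (hu : ‖u‖ = 1) : ‖T u‖ < C / (1 - δ) := by
  have hT := T.opNorm_le_div_of_sphere_subset_thickening hC hδ0 hδ1 hS hsub
  calc ‖T u‖ < C + δ * ‖T‖ :=
        T.norm_apply_lt_add_of_mem_thickening hS (hsub (mem_sphere_zero_iff_norm.mpr hu))
    _ ≤ C + δ * (C / (1 - δ)) := by gcongr
    _ = C / (1 - δ) := by field_simp [(sub_pos.mpr hδ1).ne']; ring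

end RealOpNorm

theorem Matrix.norm_toEuclideanLin_of_mem_unitaryGroup {𝕜 n : Type*} [RCLike 𝕜] [Fintype n]
    [DecidableEq n] {Q : Matrix n n 𝕜} (hQ : Q ∈ unitaryGroup n 𝕜) (v : EuclideanSpace 𝕜 n) :
    ‖toEuclideanLin Q v‖ = ‖v‖ :=
  (toEuclideanCLM (𝕜 := 𝕜) Q).norm_map_of_mem_unitary (Unitary.map_mem _ hQ) v

theorem Matrix.norm_toEuclideanLin_mul_sub_le {𝕜 n : Type*} [RCLike 𝕜] [Fintype n]
    [DecidableEq n] {P Q R : Matrix n n 𝕜} (hP : P ∈ unitaryGroup n 𝕜)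
    (a b c : EuclideanSpace 𝕜 n) :
    ‖toEuclideanLin (P * Q - R) c‖ ≤
      ‖a - toEuclideanLin P b‖ + ‖b - toEuclideanLin Q c‖ + ‖a - toEuclideanLin R c‖ := by
  have hsplit : toEuclideanLin (P * Q - R) c =
      toEuclideanLin P (toEuclideanLin Q c - b) + (toEuclideanLin P b - a) +
        (a - toEuclideanLin R c) := by
    simp only [← coe_toEuclideanCLM_eq_toEuclideanLin, map_sub, map_mul,
      ContinuousLinearMap.toLinearMap_mul, LinearMap.sub_apply, Module.End.mul_apply]
    abel
  calc ‖toEuclideanLin (P * Q - R) c‖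
      ≤ ‖toEuclideanLin P (toEuclideanLin Q c - b)‖ + ‖toEuclideanLin P b - a‖ +
          ‖a - toEuclideanLin R c‖ := hsplit ▸ norm_add₃_le
    _ = _ := by
      rw [norm_toEuclideanLin_of_mem_unitaryGroup hP, norm_sub_rev _ b, norm_sub_rev _ a]
      ring

theorem Matrix.norm_toEuclideanLin_single_sq {m n : Type*} [Fintype m] [Fintype n]
    [DecidableEq n] (A : Matrix m n ℝ) (j : n) :
    ‖toEuclideanLin A (EuclideanSpace.single j 1)‖ ^ 2 = ∑ i, A i j ^ 2 := by
  simp [EuclideanSpace.norm_sq_eq]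

theorem frobeniusNorm_lt_sqrt_two_mul_of_unit_norm {A : Matrix (Fin 2) (Fin 2) ℝ} {K : ℝ}
    (hA : ∀ u : EuclideanSpace ℝ (Fin 2), ‖u‖ = 1 → ‖toEuclideanLin A u‖ < K) :
    frobeniusNorm A < √2 * K := by
  have hcol (j : Fin 2) : ∑ i, A i j ^ 2 < K ^ 2 := by
    have hj := hA (EuclideanSpace.single j 1) (by simp)
    rw [← norm_toEuclideanLin_single_sq]
    exact pow_lt_pow_left₀ hj (norm_nonneg _) two_ne_zero
  have hK : 0 < K := (norm_nonneg _).trans_lt (hA (EuclideanSpace.single 0 1) (by simp))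
  rw [frobeniusNorm, Finset.sum_comm, Real.sqrt_lt' (by positivity), mul_pow,
    Real.sq_sqrt zero_le_two, Fin.sum_univ_two]
  linarith [hcol 0, hcol 1]

theorem witness_is_approximate_cocycle_general {X B J : Type*} (π : X → B) (U : J → Set B)
    (f : J → X → EuclideanSpace ℝ (Fin 2)) (ε δ : ℝ) (hε : 0 < ε) (hδ0 : 0 ≤ δ)
    (hδ1 : δ < 1)
    (Ω : J → J → Matrix.orthogonalGroup (Fin 2) ℝ)
    (hΩ : ∀ j k, (U j ∩ U k).Nonempty → ∀ x ∈ π ⁻¹' (U j ∩ U k),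
      ‖f j x - Matrix.toEuclideanLin ((Ω j k : Matrix (Fin 2) (Fin 2) ℝ)) (f k x)‖ < ε)
    (hH : ∀ j k l, (U j ∩ U k ∩ U l).Nonempty →
      EMetric.hausdorffEdist (f l '' (π ⁻¹' (U j ∩ U k ∩ U l)))
        (Metric.sphere (0 : EuclideanSpace ℝ (Fin 2)) 1) < ENNReal.ofReal δ) :
    ∀ j k l, (U j ∩ U k ∩ U l).Nonempty →
      frobeniusNorm ((Ω j k : Matrix (Fin 2) (Fin 2) ℝ) * (Ω k l : Matrix (Fin 2) (Fin 2) ℝ)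
          - (Ω j l : Matrix (Fin 2) (Fin 2) ℝ))
        < 3 * Real.sqrt 2 * ε / (1 - δ) := by
  intro j k l hjkl
  obtain ⟨b, ⟨hbj, hbk⟩, hbl⟩ := hjkl
  set S := f l '' (π ⁻¹' (U j ∩ U k ∩ U l))
  have hdefect : ∀ v ∈ S, ‖toEuclideanLin ((Ω j k : Matrix (Fin 2) (Fin 2) ℝ) *
      (Ω k l : Matrix (Fin 2) (Fin 2) ℝ) - (Ω j l : Matrix (Fin 2) (Fin 2) ℝ)) v‖ < 3 * ε := by
    rintro _ ⟨x, ⟨⟨hxj, hxk⟩, hxl⟩, rfl⟩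
    refine (norm_toEuclideanLin_mul_sub_le (Ω j k).2 (f j x) (f k x) (f l x)).trans_lt ?_
    linarith [hΩ j k ⟨b, hbj, hbk⟩ x ⟨hxj, hxk⟩, hΩ k l ⟨b, hbk, hbl⟩ x ⟨hxk, hxl⟩,
      hΩ j l ⟨b, hbj, hbl⟩ x ⟨hxj, hxl⟩]
  have hsub : sphere 0 1 ⊆ thickening δ S := fun u hu =>
    mem_thickening_iff_infEDist_lt.mpr <| (infEDist_le_hausdorffEDist_of_mem hu).trans_lt <|
      hausdorffEDist_comm (s := S) ▸ hH j k l ⟨b, ⟨hbj, hbk⟩, hbl⟩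
  rw [show 3 * √2 * ε / (1 - δ) = √2 * (3 * ε / (1 - δ)) by ring]
  exact frobeniusNorm_lt_sqrt_two_mul_of_unit_norm fun u hu =>
    (toEuclideanCLM (𝕜 := ℝ) _).norm_apply_lt_div_of_sphere_subset_thickening (by positivity)
      hδ0 hδ1 hdefect hsub hu

/-- A witness `(Ω_{jk})` of a discrete `(ε, δ)`-approximate local
trivialization is a discrete `(3√2 ε / (1 − δ))`-approximate Čech 1-cocycle: on every
triple intersection, `‖Ω_{jk} Ω_{kl} − Ω_{jl}‖_F < 3√2 ε / (1 − δ)`. -/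
theorem witness_is_approximate_cocycle {X B J : Type*} (π : X → B) (U : J → Set B)
    (f : J → X → EuclideanSpace ℝ (Fin 2)) (ε δ : ℝ) (hε : 0 < ε) (hδ0 : 0 ≤ δ)
    (hδ1 : δ < 1)
    (hsph : ∀ j, ∀ x ∈ π ⁻¹' (U j),
      f j x ∈ Metric.sphere (0 : EuclideanSpace ℝ (Fin 2)) 1)
    (Ω : J → J → Matrix.orthogonalGroup (Fin 2) ℝ)
    (hΩ : ∀ j k, (U j ∩ U k).Nonempty → ∀ x ∈ π ⁻¹' (U j ∩ U k),
      ‖f j x - Matrix.toEuclideanLin ((Ω j k : Matrix (Fin 2) (Fin 2) ℝ)) (f k x)‖ < ε)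
    (hH : ∀ j k l, (U j ∩ U k ∩ U l).Nonempty →
      EMetric.hausdorffEdist (f l '' (π ⁻¹' (U j ∩ U k ∩ U l)))
        (Metric.sphere (0 : EuclideanSpace ℝ (Fin 2)) 1) < ENNReal.ofReal δ) :
    ∀ j k l, (U j ∩ U k ∩ U l).Nonempty →
      frobeniusNorm ((Ω j k : Matrix (Fin 2) (Fin 2) ℝ) * (Ω k l : Matrix (Fin 2) (Fin 2) ℝ)
          - (Ω j l : Matrix (Fin 2) (Fin 2) ℝ))
        < 3 * Real.sqrt 2 * ε / (1 - δ) :=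
  witness_is_approximate_cocycle_general π U f ε δ hε hδ0 hδ1 Ω hΩ hH
end

section
/- Let π : X → B be a map of sets, {U_j}_{j ∈ J} a family of subsets of B, and f_j, g_j : π⁻¹(U_j) → S¹ maps. Suppose (Ω_{jk}) and (Λ_{jk}) are families of matrices in O(2) indexed by pairs (j,k) with U_j ∩ U_k ≠ ∅, such that ‖f_j(x) − Ω_{jk} f_k(x)‖ < ε_f and ‖g_j(x) − Λ_{jk} g_k(x)‖ < ε_g for all x ∈ π⁻¹(U_j ∩ U_k). Suppose further that for every pair (j,k) with U_j ∩ U_k ≠ ∅ the Hausdorff distance (Euclidean) between f_k(π⁻¹(U_j ∩ U_k)) and S¹ is strictly less than δ₁, where 0 ≤ δ₁ < 1, and that sup_{j ∈ J} sup_{x ∈ π⁻¹(U_j)} ‖f_j(x) − g_j(x)‖ < δ₂. Then for every pair (j,k) with U_j ∩ U_k ≠ ∅, ‖Ω_{jk} − Λ_{jk}‖_F < (√2/(1−δ₁))·(ε_f + ε_g + 2δ₂). -/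
open Metric

namespace ContinuousLinearMap

variable {E F : Type*} [NormedAddCommGroup E] [NormedSpace ℝ E] [SeminormedAddCommGroup F]
  [NormedSpace ℝ F]

theorem exists_mem_sphere_norm_apply_eq_opNorm [FiniteDimensional ℝ E] [Nontrivial E]
    (L : E →L[ℝ] F) : ∃ u ∈ sphere (0 : E) 1, ‖L u‖ = ‖L‖ := by
  obtain ⟨u, hu, hmax⟩ := (isCompact_sphere (0 : E) 1).exists_isMaxOn
    (NormedSpace.sphere_nonempty.mpr zero_le_one) (L.continuous.norm.continuousOn)
  refine ⟨u, hu, le_antisymm ?_ ?_⟩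
  · simpa [mem_sphere_zero_iff_norm.mp hu] using L.le_opNorm u
  · exact L.opNorm_le_of_unit_norm (norm_nonneg _) fun v hv ↦
      hmax (mem_sphere_zero_iff_norm.mpr hv)

theorem opNorm_mul_one_sub_lt_of_hausdorffEDist_sphere_lt [FiniteDimensional ℝ E]
    [Nontrivial E] (L : E →L[ℝ] F) {S : Set E} {c δ : ℝ}
    (hS : hausdorffEDist S (sphere (0 : E) 1) < ENNReal.ofReal δ) (hL : ∀ v ∈ S, ‖L v‖ < c) :
    ‖L‖ * (1 - δ) < c := by
  obtain ⟨u, hu, hLu⟩ := L.exists_mem_sphere_norm_apply_eq_opNorm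
  rw [hausdorffEDist_comm] at hS
  obtain ⟨v, hv, huv⟩ := exists_edist_lt_of_hausdorffEDist_lt hu hS
  have huv : ‖u - v‖ < δ := by rw [← dist_eq_norm]; exact edist_lt_ofReal.mp huv
  have : ‖L‖ < c + ‖L‖ * δ := calc
    ‖L‖ = ‖L v + L (u - v)‖ := by rw [← hLu, map_sub, add_sub_cancel]
    _ ≤ ‖L v‖ + ‖L‖ * ‖u - v‖ := norm_add_le_of_le le_rfl (L.le_opNorm _)
    _ < c + ‖L‖ * δ := add_lt_add_of_lt_of_le (hL v hv)
        (mul_le_mul_of_nonneg_left huv.le L.opNorm_nonneg)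
  linarith

end ContinuousLinearMap

namespace Matrix

variable {n : Type*} [Fintype n] [DecidableEq n]

theorem norm_toEuclideanLin_of_mem_unitaryGroup_s9 {𝕜 : Type*} [RCLike 𝕜] {U : Matrix n n 𝕜}
    (hU : U ∈ unitaryGroup n 𝕜) (v : EuclideanSpace 𝕜 n) :
    ‖toEuclideanLin U v‖ = ‖v‖ := by
  have hu : toEuclideanCLM (𝕜 := 𝕜) U ∈ unitary (EuclideanSpace 𝕜 n →L[𝕜] EuclideanSpace 𝕜 n) :=
    ⟨by rw [← map_star, ← map_mul, Unitary.star_mul_self_of_mem hU, map_one],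
      by rw [← map_star, ← map_mul, Unitary.mul_star_self_of_mem hU, map_one]⟩
  exact ContinuousLinearMap.norm_map_of_mem_unitary hu v

theorem sum_sq_col_le_opNorm_sq (M : Matrix n n ℝ) (j : n) :
    ∑ i, M i j ^ 2 ≤ ‖toEuclideanCLM (𝕜 := ℝ) M‖ ^ 2 := by
  have hcol : toEuclideanCLM (𝕜 := ℝ) M (EuclideanSpace.single j 1) = WithLp.toLp 2 (M.col j) := by
    rw [← mulVec_single_one]; rfl
  calc ∑ i, M i j ^ 2 = ‖toEuclideanCLM (𝕜 := ℝ) M (EuclideanSpace.single j 1)‖ ^ 2 := by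
        rw [hcol, EuclideanSpace.real_norm_sq_eq]; rfl
    _ ≤ ‖toEuclideanCLM (𝕜 := ℝ) M‖ ^ 2 := by
        gcongr
        simpa using (toEuclideanCLM (𝕜 := ℝ) M).le_opNorm (EuclideanSpace.single j 1)

theorem sum_sum_sq_le_card_mul_opNorm_sq (M : Matrix n n ℝ) :
    ∑ i, ∑ j, M i j ^ 2 ≤ Fintype.card n * ‖toEuclideanCLM (𝕜 := ℝ) M‖ ^ 2 := by
  rw [Finset.sum_comm]
  simpa using Finset.sum_le_sum fun j (_ : j ∈ Finset.univ) ↦ M.sum_sq_col_le_opNorm_sq j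

end Matrix

theorem frobeniusNorm_le_sqrt_two_mul_opNorm (M : Matrix (Fin 2) (Fin 2) ℝ) :
    frobeniusNorm M ≤ Real.sqrt 2 * ‖Matrix.toEuclideanCLM (𝕜 := ℝ) M‖ := by
  rw [← Real.sqrt_sq (norm_nonneg (Matrix.toEuclideanCLM (𝕜 := ℝ) M)), ← Real.sqrt_mul zero_le_two]
  refine Real.sqrt_le_sqrt ?_
  simpa using M.sum_sum_sq_le_card_mul_opNorm_sq

theorem norm_sub_map_le_of_norm_map_eq {E F G : Type*} [SeminormedAddCommGroup E]
    [SeminormedAddCommGroup F] [FunLike G E F] [AddMonoidHomClass G E F] {B : G}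
    (hB : ∀ v, ‖B v‖ = ‖v‖) (y b c : F) (a d : E) :
    ‖y - B a‖ ≤ ‖b - y‖ + ‖b - c‖ + ‖c - B d‖ + ‖a - d‖ := by
  calc ‖y - B a‖ = ‖-(b - y) + (b - c) + (c - B d) + B (d - a)‖ := by
        rw [map_sub]; congr 1; abel
    _ ≤ ‖-(b - y)‖ + ‖b - c‖ + ‖c - B d‖ + ‖B (d - a)‖ := norm_add₄_le
    _ = ‖b - y‖ + ‖b - c‖ + ‖c - B d‖ + ‖a - d‖ := by rw [norm_neg, hB, norm_sub_rev d]

theorem witnesses_of_close_trivializations_general {X B J : Type*} (π : X → B) (U : J → Set B)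
    (f g : J → X → EuclideanSpace ℝ (Fin 2)) (εf εg δ₁ δ₂ : ℝ)
    (hδ₁1 : δ₁ < 1)
    (Ω Λ : J → J → Matrix.orthogonalGroup (Fin 2) ℝ)
    (hΩ : ∀ j k, (U j ∩ U k).Nonempty → ∀ x ∈ π ⁻¹' (U j ∩ U k),
      ‖f j x - Matrix.toEuclideanLin ((Ω j k : Matrix (Fin 2) (Fin 2) ℝ)) (f k x)‖ < εf)
    (hΛ : ∀ j k, (U j ∩ U k).Nonempty → ∀ x ∈ π ⁻¹' (U j ∩ U k),
      ‖g j x - Matrix.toEuclideanLin ((Λ j k : Matrix (Fin 2) (Fin 2) ℝ)) (g k x)‖ < εg)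
    (hH : ∀ j k, (U j ∩ U k).Nonempty →
      EMetric.hausdorffEdist (f k '' (π ⁻¹' (U j ∩ U k)))
        (Metric.sphere (0 : EuclideanSpace ℝ (Fin 2)) 1) < ENNReal.ofReal δ₁)
    (hT : ∀ j, ∀ x ∈ π ⁻¹' (U j), ‖f j x - g j x‖ < δ₂) :
    ∀ j k, (U j ∩ U k).Nonempty →
      frobeniusNorm ((Ω j k : Matrix (Fin 2) (Fin 2) ℝ) - (Λ j k : Matrix (Fin 2) (Fin 2) ℝ))
        < Real.sqrt 2 / (1 - δ₁) * (εf + εg + 2 * δ₂) := by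
  intro j k hjk
  set L := Matrix.toEuclideanCLM (𝕜 := ℝ)
    ((Ω j k : Matrix (Fin 2) (Fin 2) ℝ) - (Λ j k : Matrix (Fin 2) (Fin 2) ℝ))
  have hL : ∀ v ∈ f k '' (π ⁻¹' (U j ∩ U k)), ‖L v‖ < εf + εg + 2 * δ₂ := by
    rintro _ ⟨x, hx, rfl⟩
    have hLx : L (f k x) = Matrix.toEuclideanLin (Ω j k : Matrix (Fin 2) (Fin 2) ℝ) (f k x)
        - Matrix.toEuclideanLin (Λ j k : Matrix (Fin 2) (Fin 2) ℝ) (f k x) := by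
      simp only [L, map_sub, sub_apply]; rfl
    calc ‖L (f k x)‖ ≤ _ := hLx ▸ norm_sub_map_le_of_norm_map_eq
          (Matrix.norm_toEuclideanLin_of_mem_unitaryGroup_s9 (Λ j k).2) _ (f j x) (g j x) _ (g k x)
      _ < εf + εg + 2 * δ₂ := by
        linarith [hΩ j k hjk x hx, hΛ j k hjk x hx, hT j x hx.1, hT k x hx.2]
  have hLnorm := L.opNorm_mul_one_sub_lt_of_hausdorffEDist_sphere_lt (hH j k hjk) hL
  calc frobeniusNorm _ ≤ Real.sqrt 2 * ‖L‖ := frobeniusNorm_le_sqrt_two_mul_opNorm _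
    _ < Real.sqrt 2 / (1 - δ₁) * (εf + εg + 2 * δ₂) := by
      rw [div_mul_eq_mul_div, lt_div_iff₀ (sub_pos.2 hδ₁1), mul_assoc]
      gcongr

/-- If `(Ω_{jk})` and `(Λ_{jk})` respectively witness the discrete
approximate local trivializations `{f_j}` (quality `ε_f`) and `{g_j}` (quality `ε_g`),
the images `f_k(π⁻¹(U_j ∩ U_k))` are `δ₁`-Hausdorff close to `S¹` (`0 ≤ δ₁ < 1`), and
`d_T({f_j}, {g_j}) < δ₂`, then on every nonempty double intersection
`‖Ω_{jk} − Λ_{jk}‖_F < (√2 / (1 − δ₁)) (ε_f + ε_g + 2 δ₂)`. -/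
theorem witnesses_of_close_trivializations {X B J : Type*} (π : X → B) (U : J → Set B)
    (f g : J → X → EuclideanSpace ℝ (Fin 2)) (εf εg δ₁ δ₂ : ℝ)
    (hδ₁0 : 0 ≤ δ₁) (hδ₁1 : δ₁ < 1)
    (hfsph : ∀ j, ∀ x ∈ π ⁻¹' (U j),
      f j x ∈ Metric.sphere (0 : EuclideanSpace ℝ (Fin 2)) 1)
    (hgsph : ∀ j, ∀ x ∈ π ⁻¹' (U j),
      g j x ∈ Metric.sphere (0 : EuclideanSpace ℝ (Fin 2)) 1)
    (Ω Λ : J → J → Matrix.orthogonalGroup (Fin 2) ℝ)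
    (hΩ : ∀ j k, (U j ∩ U k).Nonempty → ∀ x ∈ π ⁻¹' (U j ∩ U k),
      ‖f j x - Matrix.toEuclideanLin ((Ω j k : Matrix (Fin 2) (Fin 2) ℝ)) (f k x)‖ < εf)
    (hΛ : ∀ j k, (U j ∩ U k).Nonempty → ∀ x ∈ π ⁻¹' (U j ∩ U k),
      ‖g j x - Matrix.toEuclideanLin ((Λ j k : Matrix (Fin 2) (Fin 2) ℝ)) (g k x)‖ < εg)
    (hH : ∀ j k, (U j ∩ U k).Nonempty →
      EMetric.hausdorffEdist (f k '' (π ⁻¹' (U j ∩ U k)))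
        (Metric.sphere (0 : EuclideanSpace ℝ (Fin 2)) 1) < ENNReal.ofReal δ₁)
    (hT : ∀ j, ∀ x ∈ π ⁻¹' (U j), ‖f j x - g j x‖ < δ₂) :
    ∀ j k, (U j ∩ U k).Nonempty →
      frobeniusNorm ((Ω j k : Matrix (Fin 2) (Fin 2) ℝ) - (Λ j k : Matrix (Fin 2) (Fin 2) ℝ))
        < Real.sqrt 2 / (1 - δ₁) * (εf + εg + 2 * δ₂) :=
  witnesses_of_close_trivializations_general π U f g εf εg δ₁ δ₂ hδ₁1 Ω Λ hΩ hΛ hH hT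
end

section
/- Let π : X → B be a map of sets, {U_j}_{j ∈ J} a family of subsets of B, f_j : π⁻¹(U_j) → S¹ maps, ε > 0 and 0 ≤ δ < 1. Suppose that for every pair (j,k) with U_j ∩ U_k ≠ ∅, the Hausdorff distance (Euclidean) between f_k(π⁻¹(U_j ∩ U_k)) and S¹ is strictly less than δ, and that (Ω_{jk}) and (Λ_{jk}) are two families of matrices in O(2), indexed by pairs (j,k) with U_j ∩ U_k ≠ ∅, satisfying both ‖f_j(x) − Ω_{jk} f_k(x)‖ < ε and ‖f_j(x) − Λ_{jk} f_k(x)‖ < ε for all x ∈ π⁻¹(U_j ∩ U_k). Then for every pair (j,k) with U_j ∩ U_k ≠ ∅, ‖Ω_{jk} − Λ_{jk}‖_F < 2√2 · ε/(1−δ). -/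
open Metric

section

variable {E F : Type*} [NormedAddCommGroup E] [NormedAddCommGroup F] [NormedSpace ℝ E]
  [NormedSpace ℝ F]

theorem ContinuousLinearMap.norm_apply_lt_of_hausdorffEDist_lt (T : E →L[ℝ] F)
    {S t : Set E} {η δ : ℝ} (hS : ∀ s ∈ S, ‖T s‖ < η) (hH : hausdorffEDist S t < ENNReal.ofReal δ)
    {v : E} (hv : v ∈ t) : ‖T v‖ < η + ‖T‖ * δ := by
  obtain ⟨s, hs, hvs⟩ :=
    exists_edist_lt_of_hausdorffEDist_lt hv (hausdorffEDist_comm.trans_lt hH)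
  rw [edist_lt_ofReal, dist_eq_norm] at hvs
  calc ‖T v‖ = ‖T s + T (v - s)‖ := by rw [← map_add, add_sub_cancel]
    _ ≤ ‖T s‖ + ‖T‖ * ‖v - s‖ := norm_add_le_of_le le_rfl (T.le_opNorm _)
    _ < η + ‖T‖ * δ := add_lt_add_of_lt_of_le (hS s hs) (by gcongr)

theorem ContinuousLinearMap.norm_apply_lt_of_hausdorffEDist_sphere_lt (T : E →L[ℝ] F)
    {S : Set E} {η δ : ℝ} (hη : 0 ≤ η) (hδ0 : 0 ≤ δ) (hδ1 : δ < 1) (hS : ∀ s ∈ S, ‖T s‖ < η)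
    (hH : hausdorffEDist S (sphere 0 1) < ENNReal.ofReal δ) {v : E} (hv : ‖v‖ = 1) :
    ‖T v‖ < η / (1 - δ) := by
  have hsphere : ∀ v : E, ‖v‖ = 1 → ‖T v‖ < η + ‖T‖ * δ := fun v hv =>
    T.norm_apply_lt_of_hausdorffEDist_lt hS hH (mem_sphere_zero_iff_norm.mpr hv)
  have hT : ‖T‖ ≤ η / (1 - δ) := by
    have := T.opNorm_le_of_unit_norm (by positivity) fun v hv => (hsphere v hv).le
    rw [le_div_iff₀ (by linarith)]
    linarith
  calc ‖T v‖ < η + ‖T‖ * δ := hsphere v hv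
    _ ≤ η + η / (1 - δ) * δ := by gcongr
    _ = η / (1 - δ) := by field_simp [(sub_pos.mpr hδ1).ne']; ring

end

theorem Matrix.norm_toEuclideanLin_single {m n : Type*} [Fintype m] [Fintype n]
    [DecidableEq n] (M : Matrix m n ℝ) (i : n) :
    ‖toEuclideanLin M (EuclideanSpace.single i 1)‖ = √(∑ r, M r i ^ 2) := by
  simp [EuclideanSpace.norm_eq, toLpLin_apply, mulVec_single]

theorem frobeniusNorm_lt_of_norm_toEuclideanLin_lt (M : Matrix (Fin 2) (Fin 2) ℝ) {c : ℝ}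
    (hM : ∀ v : EuclideanSpace ℝ (Fin 2), ‖v‖ = 1 → ‖Matrix.toEuclideanLin M v‖ < c) :
    frobeniusNorm M < √2 * c := by
  have hcol : ∀ i, ∑ r, M r i ^ 2 < c ^ 2 := fun i => by
    have h := hM (EuclideanSpace.single i 1) (by simp)
    rw [M.norm_toEuclideanLin_single] at h
    exact (Real.sqrt_lt' ((Real.sqrt_nonneg _).trans_lt h)).mp h
  have hc : 0 < c := (norm_nonneg _).trans_lt (hM (EuclideanSpace.single 0 1) (by simp))
  calc frobeniusNorm M = √(∑ i, ∑ r, M r i ^ 2) := by rw [frobeniusNorm, Finset.sum_comm]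
    _ < √(2 * c ^ 2) := by
      gcongr
      simpa [Fin.sum_univ_two, two_mul] using add_lt_add (hcol 0) (hcol 1)
    _ = √2 * c := by rw [Real.sqrt_mul zero_le_two, Real.sqrt_sq hc.le]

theorem two_witnesses_are_close_general {X B J : Type*} (π : X → B) (U : J → Set B)
    (f : J → X → EuclideanSpace ℝ (Fin 2)) (ε δ : ℝ) (hε : 0 < ε) (hδ0 : 0 ≤ δ)
    (hδ1 : δ < 1)
    (hH : ∀ j k, (U j ∩ U k).Nonempty →
      EMetric.hausdorffEdist (f k '' (π ⁻¹' (U j ∩ U k)))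
        (Metric.sphere (0 : EuclideanSpace ℝ (Fin 2)) 1) < ENNReal.ofReal δ)
    (Ω Λ : J → J → Matrix.orthogonalGroup (Fin 2) ℝ)
    (hΩ : ∀ j k, (U j ∩ U k).Nonempty → ∀ x ∈ π ⁻¹' (U j ∩ U k),
      ‖f j x - Matrix.toEuclideanLin ((Ω j k : Matrix (Fin 2) (Fin 2) ℝ)) (f k x)‖ < ε)
    (hΛ : ∀ j k, (U j ∩ U k).Nonempty → ∀ x ∈ π ⁻¹' (U j ∩ U k),
      ‖f j x - Matrix.toEuclideanLin ((Λ j k : Matrix (Fin 2) (Fin 2) ℝ)) (f k x)‖ < ε) :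
    ∀ j k, (U j ∩ U k).Nonempty →
      frobeniusNorm ((Ω j k : Matrix (Fin 2) (Fin 2) ℝ) - (Λ j k : Matrix (Fin 2) (Fin 2) ℝ))
        < 2 * Real.sqrt 2 * ε / (1 - δ) := by
  intro j k hne
  set T := LinearMap.toContinuousLinearMap <| Matrix.toEuclideanLin
    ((Ω j k : Matrix (Fin 2) (Fin 2) ℝ) - (Λ j k : Matrix (Fin 2) (Fin 2) ℝ))
  have hT : ∀ y ∈ f k '' (π ⁻¹' (U j ∩ U k)), ‖T y‖ < 2 * ε := by
    rintro _ ⟨x, hx, rfl⟩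
    have hΩx := hΩ j k hne x hx
    have hΛx := hΛ j k hne x hx
    calc ‖T (f k x)‖ = ‖(f j x - Matrix.toEuclideanLin (Λ j k : Matrix (Fin 2) (Fin 2) ℝ) (f k x))
          - (f j x - Matrix.toEuclideanLin (Ω j k : Matrix (Fin 2) (Fin 2) ℝ) (f k x))‖ := by
          rw [sub_sub_sub_cancel_left, ← LinearMap.sub_apply, ← map_sub]
          rfl
      _ < 2 * ε := (norm_sub_le _ _).trans_lt (by linarith)
  calc _ < √2 * (2 * ε / (1 - δ)) := frobeniusNorm_lt_of_norm_toEuclideanLin_lt _ fun v hv =>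
        T.norm_apply_lt_of_hausdorffEDist_sphere_lt (by positivity) hδ0 hδ1 hT (hH j k hne) hv
    _ = 2 * √2 * ε / (1 - δ) := by ring

/-- Any two witnesses `(Ω_{jk})`, `(Λ_{jk})` of the same discrete
`(ε, δ)`-approximate local trivialization `{f_j}` satisfy, on every nonempty double
intersection, `‖Ω_{jk} − Λ_{jk}‖_F < 2√2 ε / (1 − δ)`. -/
theorem two_witnesses_are_close {X B J : Type*} (π : X → B) (U : J → Set B)
    (f : J → X → EuclideanSpace ℝ (Fin 2)) (ε δ : ℝ) (hε : 0 < ε) (hδ0 : 0 ≤ δ)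
    (hδ1 : δ < 1)
    (hsph : ∀ j, ∀ x ∈ π ⁻¹' (U j),
      f j x ∈ Metric.sphere (0 : EuclideanSpace ℝ (Fin 2)) 1)
    (hH : ∀ j k, (U j ∩ U k).Nonempty →
      EMetric.hausdorffEdist (f k '' (π ⁻¹' (U j ∩ U k)))
        (Metric.sphere (0 : EuclideanSpace ℝ (Fin 2)) 1) < ENNReal.ofReal δ)
    (Ω Λ : J → J → Matrix.orthogonalGroup (Fin 2) ℝ)
    (hΩ : ∀ j k, (U j ∩ U k).Nonempty → ∀ x ∈ π ⁻¹' (U j ∩ U k),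
      ‖f j x - Matrix.toEuclideanLin ((Ω j k : Matrix (Fin 2) (Fin 2) ℝ)) (f k x)‖ < ε)
    (hΛ : ∀ j k, (U j ∩ U k).Nonempty → ∀ x ∈ π ⁻¹' (U j ∩ U k),
      ‖f j x - Matrix.toEuclideanLin ((Λ j k : Matrix (Fin 2) (Fin 2) ℝ)) (f k x)‖ < ε) :
    ∀ j k, (U j ∩ U k).Nonempty →
      frobeniusNorm ((Ω j k : Matrix (Fin 2) (Fin 2) ℝ) - (Λ j k : Matrix (Fin 2) (Fin 2) ℝ))
        < 2 * Real.sqrt 2 * ε / (1 - δ) :=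
  two_witnesses_are_close_general π U f ε δ hε hδ0 hδ1 hH Ω Λ hΩ hΛ
end

section
/- Let n ≥ 1 and let γ_1, …, γ_n be points of the circle ℝ/2πℤ (with arc-length distance d) which are all contained in a closed arc of length strictly less than π. Then: (i) there is a unique θ ∈ ℝ/2πℤ minimizing max_{1 ≤ s ≤ n} d(θ, γ_s), namely the midpoint of the unique shortest closed arc containing all the γ_s; and (ii) if u_s = e^{iα_s} and v_s = e^{iβ_s} are unit complex numbers with α_s − β_s ≡ γ_s (mod 2π) for each s, then the rotation by angle θ is the unique minimizer, over all R ∈ SO(2), of max_{1 ≤ s ≤ n} ‖u_s − R v_s‖ (Euclidean norm on ℝ² ≅ ℂ). -/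
/-!
Lift the `γ s` to reals `x s` in an interval of length `< π` and let `x i`, `x j` be the least and
the largest lift, `r = (x j - x i) / 2`. The midpoint of `[x i, x j]` is within `r` of every `γ s`,
and since `γ i`, `γ j` are exactly `2 r` apart, the triangle inequality shows that no point does
better. A point within `r` of both `γ i` and `γ j` has a lift within `r` of `x i` and one within `r`
of `x j`; these differ by at most `4 r < 2 π`, hence coincide, which pins the point down as the
midpoint.

For (ii), `‖e^{iα} - e^{iτ} e^{iβ}‖ = 2 sin (d(τ, α - β) / 2)` is a strictly increasing function of
the circle distance `d ∈ [0, π]`, so it commutes with the maximum and the rotation problem reduces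
to (i).
-/

open Real

theorem MonotoneOn.map_ciSup_of_finite {α β ι : Type*} [ConditionallyCompleteLinearOrder α]
    [ConditionallyCompleteLinearOrder β] [Finite ι] [Nonempty ι] {g : α → β} {s : Set α}
    {f : ι → α} (hg : MonotoneOn g s) (hf : ∀ i, f i ∈ s) : g (⨆ i, f i) = ⨆ i, g (f i) := by
  obtain ⟨i, hi⟩ := exists_eq_ciSup_of_finite (f := f)
  rw [← hi]
  refine le_antisymm (le_ciSup (f := fun i => g (f i)) (Set.finite_range _).bddAbove i)
    (ciSup_le fun j => ?_)
  exact hg (hf j) (hf i) (hi ▸ le_ciSup (Set.finite_range f).bddAbove j)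

theorem dist_le_two_mul_iSup_dist {α ι : Type*} [PseudoMetricSpace α] [Finite ι] (f : ι → α)
    (y : α) (i j : ι) : dist (f i) (f j) ≤ 2 * ⨆ k, dist y (f k) := by
  have hbdd := (Set.finite_range fun k => dist y (f k)).bddAbove
  linarith [dist_triangle_left (f i) (f j) y, le_ciSup hbdd i, le_ciSup hbdd j]

namespace AddCircle

variable {p : ℝ}

theorem dist_coe_coe (x y : ℝ) :
    dist (x : AddCircle p) y = |x - y - round (p⁻¹ * (x - y)) * p| := by
  rw [dist_eq_norm, ← coe_sub, norm_eq]

theorem exists_coe_eq_abs_sub_eq_dist (φ : AddCircle p) (y : ℝ) :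
    ∃ x : ℝ, (x : AddCircle p) = φ ∧ |x - y| = dist φ y := by
  obtain ⟨z, rfl⟩ := QuotientAddGroup.mk_surjective φ
  refine ⟨z - round (p⁻¹ * (z - y)) * p, ?_, by rw [dist_coe_coe]; ring_nf⟩
  rw [coe_sub, ← zsmul_eq_mul, coe_zsmul, coe_period, smul_zero, sub_zero]

theorem dist_coe_coe_le_abs (x y : ℝ) : dist (x : AddCircle p) y ≤ |x - y| := by
  rw [dist_eq_norm, ← coe_sub]
  exact QuotientAddGroup.norm_mk_le_norm

theorem dist_coe_coe_of_abs_sub_le (hp : 0 < p) {x y : ℝ} (h : |x - y| ≤ p / 2) :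
    dist (x : AddCircle p) y = |x - y| := by
  rwa [dist_eq_norm, ← coe_sub, norm_coe_eq_abs_iff (hp := hp.ne'), abs_of_pos hp]

theorem dist_le_half_period (hp : 0 < p) (φ ψ : AddCircle p) : dist φ ψ ≤ p / 2 := by
  simpa [dist_eq_norm, abs_of_pos hp] using norm_le_half_period (x := φ - ψ) (hp := hp.ne')

theorem eq_of_coe_eq_coe_of_abs_sub_lt {x y : ℝ} (h : (x : AddCircle p) = y)
    (hxy : |x - y| < p) : x = y := by
  have hp : 0 < p := (abs_nonneg _).trans_lt hxy
  have : Fact (0 < p) := ⟨hp⟩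
  obtain ⟨hx, hy⟩ := abs_sub_lt_iff.1 hxy
  exact (coe_eq_coe_iff_of_mem_Ico (a := min x y) ⟨min_le_left _ _, by grind⟩
    ⟨min_le_right _ _, by grind⟩).1 h

theorem eq_coe_midpoint_of_dist_le {m M : ℝ} (hmM : M - m < p / 2) {φ : AddCircle p}
    (hm : dist φ m ≤ (M - m) / 2) (hM : dist φ M ≤ (M - m) / 2) : φ = ↑((m + M) / 2) := by
  obtain ⟨y, rfl, hym⟩ := exists_coe_eq_abs_sub_eq_dist φ m
  obtain ⟨y', hy', hy'M⟩ := exists_coe_eq_abs_sub_eq_dist (y : AddCircle p) M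
  rw [← hym] at hm
  rw [← hy'M] at hM
  obtain ⟨hm₁, hm₂⟩ := abs_le.1 hm
  obtain ⟨hM₁, hM₂⟩ := abs_le.1 hM
  obtain rfl : y' = y :=
    eq_of_coe_eq_coe_of_abs_sub_lt hy' (abs_sub_lt_iff.2 ⟨by linarith, by linarith⟩)
  congr 1
  linarith

section ShortArc

variable {ι : Type*} {γ : ι → AddCircle p} {x : ι → ℝ} {i j : ι}

theorem iSup_dist_le_iff_eq_midpoint [Finite ι] (hx : ∀ k, (x k : AddCircle p) = γ k)
    (hi : ∀ k, x i ≤ x k) (hj : ∀ k, x k ≤ x j) (hij : x j - x i < p / 2) (φ : AddCircle p) :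
    (⨆ k, dist φ (γ k)) ≤ (x j - x i) / 2 ↔ φ = ↑((x i + x j) / 2) := by
  obtain rfl : γ = fun k => (x k : AddCircle p) := (funext hx).symm
  have hbdd := (Set.finite_range fun k => dist φ (x k)).bddAbove
  refine ⟨fun h => eq_coe_midpoint_of_dist_le hij ((le_ciSup hbdd i).trans h)
    ((le_ciSup hbdd j).trans h), ?_⟩
  rintro rfl
  have : Nonempty ι := ⟨i⟩
  exact ciSup_le fun k => (dist_coe_coe_le_abs _ _).trans
    (abs_le.2 ⟨by linarith [hj k], by linarith [hi k]⟩)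

theorem half_sub_le_iSup_dist [Finite ι] (hp : 0 < p) (hx : ∀ k, (x k : AddCircle p) = γ k)
    (hij : x i ≤ x j) (hlen : x j - x i ≤ p / 2) (φ : AddCircle p) :
    (x j - x i) / 2 ≤ ⨆ k, dist φ (γ k) := by
  have h := dist_le_two_mul_iSup_dist γ φ j i
  rw [← hx, ← hx, dist_coe_coe_of_abs_sub_le hp (by rwa [abs_of_nonneg (sub_nonneg.2 hij)]),
    abs_of_nonneg (sub_nonneg.2 hij)] at h
  linarith

theorem sub_le_of_forall_exists_mem_Icc (hp : 0 < p) (hx : ∀ k, (x k : AddCircle p) = γ k)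
    (hij : x i ≤ x j) (hlen : x j - x i ≤ p / 2) {a ℓ : ℝ}
    (h : ∀ k, ∃ t ∈ Set.Icc a (a + ℓ), (t : AddCircle p) = γ k) : x j - x i ≤ ℓ := by
  obtain ⟨s, hs, hsi⟩ := h i
  obtain ⟨t, ht, htj⟩ := h j
  have hd := dist_coe_coe_le_abs (p := p) t s
  rw [htj, hsi, ← hx, ← hx, dist_coe_coe_of_abs_sub_le hp
    (by rwa [abs_of_nonneg (sub_nonneg.2 hij)]), abs_of_nonneg (sub_nonneg.2 hij)] at hd
  exact hd.trans (abs_sub_le_iff.2 ⟨by linarith [hs.1, ht.2], by linarith [hs.2, ht.1]⟩)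

end ShortArc

end AddCircle

theorem strictMonoOn_two_mul_sin_half : StrictMonoOn (fun d => 2 * sin (d / 2)) (Set.Icc 0 π) :=
  fun a ha b hb hab => by
    have := strictMonoOn_sin ⟨by linarith [ha.1, pi_pos], by linarith [ha.2]⟩
      ⟨by linarith [hb.1, pi_pos], by linarith [hb.2]⟩ (by linarith : a / 2 < b / 2)
    linarith

open Complex in
theorem Complex.norm_exp_mul_I_sub_exp_mul_I (x y : ℝ) :
    ‖exp (x * I) - exp (y * I)‖ = 2 * Real.sin (dist (x : AddCircle (2 * π)) y / 2) := by
  obtain ⟨k, hk⟩ : ∃ k : ℤ, dist (x : AddCircle (2 * π)) y = |x - y - k * (2 * π)| :=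
    ⟨_, AddCircle.dist_coe_coe x y⟩
  have hπ : |x - y - k * (2 * π)| ≤ π := by
    linarith [hk ▸ AddCircle.dist_le_half_period two_pi_pos (x : AddCircle (2 * π)) y]
  calc ‖exp (x * I) - exp (y * I)‖ = ‖exp (I * ↑(x - y)) - 1‖ := by
        rw [show exp (x * I) = exp (y * I) * exp (I * ↑(x - y)) by
            rw [← exp_add]; push_cast; ring_nf,
          ← mul_sub_one, norm_mul, norm_exp_ofReal_mul_I, one_mul]
    _ = 2 * |Real.sin ((x - y - k * (2 * π)) / 2)| := by
        rw [norm_exp_I_mul_ofReal_sub_one, norm_mul, norm_two, Real.norm_eq_abs,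
          show (x - y - k * (2 * π)) / 2 = (x - y) / 2 - k * π by ring, sin_sub_int_mul_pi,
          abs_mul, abs_neg_one_zpow, one_mul]
    _ = 2 * Real.sin (dist (x : AddCircle (2 * π)) y / 2) := by
        rw [abs_sin_eq_sin_abs_of_abs_le_pi (by rw [abs_div, abs_two]; linarith [pi_pos]),
          abs_div, abs_two, hk]

namespace AddCircle

theorem dist_mem_Icc_zero_pi (φ ψ : AddCircle (2 * π)) : dist φ ψ ∈ Set.Icc 0 π :=
  ⟨dist_nonneg, by linarith [dist_le_half_period two_pi_pos φ ψ]⟩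

theorem iSup_dist_mem_Icc_zero_pi {ι : Type*} [Nonempty ι] (φ : AddCircle (2 * π))
    (γ : ι → AddCircle (2 * π)) : (⨆ s, dist φ (γ s)) ∈ Set.Icc 0 π :=
  ⟨Real.iSup_nonneg fun _ => dist_nonneg, ciSup_le fun s => (dist_mem_Icc_zero_pi φ (γ s)).2⟩

open Complex in
theorem norm_exp_sub_homeomorphCircle'_mul_exp (α β : ℝ) (φ : AddCircle (2 * π)) :
    ‖exp (α * I) - homeomorphCircle' φ * exp (β * I)‖ = 2 * Real.sin (dist φ ↑(α - β) / 2) := by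
  induction φ using QuotientAddGroup.induction_on with | H τ =>
  rw [homeomorphCircle'_apply_mk, Circle.coe_exp, ← Complex.exp_add, ← add_mul, ← ofReal_add,
    norm_exp_mul_I_sub_exp_mul_I, dist_comm, dist_eq_norm, dist_eq_norm, ← coe_sub, ← coe_sub]
  ring_nf

open Complex in
theorem iSup_norm_sub_homeomorphCircle'_mul {ι : Type*} [Finite ι] [Nonempty ι] {u v : ι → ℂ}
    {α β : ι → ℝ} {γ : ι → AddCircle (2 * π)} (hu : ∀ s, u s = exp (α s * I))
    (hv : ∀ s, v s = exp (β s * I)) (hγ : ∀ s, ((α s - β s : ℝ) : AddCircle (2 * π)) = γ s)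
    (φ : AddCircle (2 * π)) :
    ⨆ s, ‖u s - homeomorphCircle' φ * v s‖ = 2 * Real.sin ((⨆ s, dist φ (γ s)) / 2) := by
  rw [strictMonoOn_two_mul_sin_half.monotoneOn.map_ciSup_of_finite
    fun s => dist_mem_Icc_zero_pi φ (γ s)]
  simp only [hu, hv, norm_exp_sub_homeomorphCircle'_mul_exp, hγ]

end AddCircle

open AddCircle in
/-- If `γ 1, …, γ n` are points of the circle `ℝ/2πℤ` (with arc-length
distance) all lying in a closed arc of length `< π`, then (i) there is a unique
`θ` minimizing `max_s d(θ, γ s)`, namely the midpoint of the unique shortest closed arc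
containing all the `γ s`; and (ii) for unit complex numbers `u s = e^{i α s}`,
`v s = e^{i β s}` with `α s − β s ≡ γ s (mod 2π)`, the rotation by angle `θ` is the
unique minimizer over `SO(2)` of `max_s ‖u s − R (v s)‖`. -/
theorem maxmin_procrustes (n : ℕ) (hn : 1 ≤ n) (γ : Fin n → AddCircle (2 * Real.pi))
    (harc : ∃ a ℓ : ℝ, 0 ≤ ℓ ∧ ℓ < Real.pi ∧
      ∀ s, ∃ t ∈ Set.Icc a (a + ℓ), ((t : AddCircle (2 * Real.pi)) = γ s))
    (u v : Fin n → ℂ) (α β : Fin n → ℝ)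
    (hu : ∀ s, u s = Complex.exp (α s * Complex.I))
    (hv : ∀ s, v s = Complex.exp (β s * Complex.I))
    (hγ : ∀ s, ((α s - β s : ℝ) : AddCircle (2 * Real.pi)) = γ s) :
    ∃ θ : AddCircle (2 * Real.pi),
      -- (i) θ minimizes the maximal distance to the γ s …
      (∀ θ' : AddCircle (2 * Real.pi), (⨆ s, dist θ (γ s)) ≤ ⨆ s, dist θ' (γ s)) ∧
      -- … and is the unique such minimizer …
      (∀ θ' : AddCircle (2 * Real.pi),
        (∀ θ'' : AddCircle (2 * Real.pi),
          (⨆ s, dist θ' (γ s)) ≤ ⨆ s, dist θ'' (γ s)) → θ' = θ) ∧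
      -- … namely the midpoint of the (unique) shortest closed arc containing the γ s.
      (∃ a ℓ : ℝ, 0 ≤ ℓ ∧
        (∀ s, ∃ t ∈ Set.Icc a (a + ℓ), ((t : AddCircle (2 * Real.pi)) = γ s)) ∧
        (∀ a' ℓ' : ℝ, 0 ≤ ℓ' →
          (∀ s, ∃ t ∈ Set.Icc a' (a' + ℓ'), ((t : AddCircle (2 * Real.pi)) = γ s)) →
          ℓ ≤ ℓ') ∧
        θ = ((a + ℓ / 2 : ℝ) : AddCircle (2 * Real.pi))) ∧
      -- (ii) rotation by θ is the unique minimizer over SO(2) of max_s ‖u s − R (v s)‖.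
      (∀ t : ℝ, ((t : AddCircle (2 * Real.pi)) = θ) →
        ∀ c : ℂ, ‖c‖ = 1 →
          ((⨆ s, ‖u s - Complex.exp (t * Complex.I) * v s‖) ≤ ⨆ s, ‖u s - c * v s‖) ∧
          (c ≠ Complex.exp (t * Complex.I) →
            (⨆ s, ‖u s - Complex.exp (t * Complex.I) * v s‖)
              < ⨆ s, ‖u s - c * v s‖)) := by
  obtain ⟨a, ℓ, -, hℓ, hcover⟩ := harc
  choose x hx hxγ using hcover
  have : Nonempty (Fin n) := ⟨⟨0, hn⟩⟩
  obtain ⟨i, hi⟩ := Finite.exists_min x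
  obtain ⟨j, hj⟩ := Finite.exists_max x
  have hij : x j - x i < 2 * π / 2 := by linarith [(hx i).1, (hx j).2]
  set θ : AddCircle (2 * π) := ↑((x i + x j) / 2)
  have hmid := iSup_dist_le_iff_eq_midpoint hxγ hi hj hij
  have hmin (φ : AddCircle (2 * π)) : (⨆ s, dist θ (γ s)) ≤ ⨆ s, dist φ (γ s) :=
    ((hmid θ).2 rfl).trans (half_sub_le_iSup_dist two_pi_pos hxγ (hi j) hij.le φ)
  have huniq (φ : AddCircle (2 * π)) (h : (⨆ s, dist φ (γ s)) ≤ ⨆ s, dist θ (γ s)) : φ = θ :=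
    (hmid φ).1 (h.trans ((hmid θ).2 rfl))
  refine ⟨θ, hmin, fun φ h => huniq φ (h θ), ⟨x i, x j - x i, sub_nonneg.2 (hi j),
    fun s => ⟨x s, ⟨hi s, by linarith [hj s]⟩, hxγ s⟩,
    fun _ _ _ => sub_le_of_forall_exists_mem_Icc two_pi_pos hxγ (hi j) hij.le,
    by rw [show x i + (x j - x i) / 2 = (x i + x j) / 2 by ring]⟩, ?_⟩
  intro t ht c hc
  obtain ⟨φ, rfl⟩ : ∃ φ, (homeomorphCircle' φ : ℂ) = c :=
    ⟨Complex.arg c, by rw [homeomorphCircle'_apply_mk, Circle.coe_exp, ← one_mul (Complex.exp _),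
      ← Complex.ofReal_one, ← hc, Complex.norm_mul_exp_arg_mul_I]⟩
  rw [show Complex.exp (t * Complex.I) = homeomorphCircle' θ by rw [← ht]; rfl,
    iSup_norm_sub_homeomorphCircle'_mul hu hv hγ, iSup_norm_sub_homeomorphCircle'_mul hu hv hγ]
  have hD (ψ : AddCircle (2 * π)) := iSup_dist_mem_Icc_zero_pi ψ γ
  exact ⟨strictMonoOn_two_mul_sin_half.monotoneOn (hD θ) (hD φ) (hmin φ), fun hne =>
    strictMonoOn_two_mul_sin_half (hD θ) (hD φ)
      ((hmin φ).lt_of_ne fun h => hne (by rw [huniq φ h.ge]))⟩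
end

section
/- Let Homeo₊(S¹) denote the group (under composition) of homeomorphisms of the circle ℝ/ℤ that admit a continuous monotone increasing lift ℝ → ℝ, and for a ∈ ℝ/ℤ let r_a denote the rotation x ↦ x + a. Then there is no group homomorphism τ : Homeo₊(S¹) → ℝ/ℤ satisfying τ(r_a) = a for all a ∈ ℝ/ℤ; that is, there is no retraction of Homeo₊(S¹) onto its rotation subgroup which is a group homomorphism. -/
/-!
A homomorphism to an abelian group kills commutators, so it suffices to find orientation-preserving
homeomorphisms `f`, `g` with `f ∘ g = r_{1/2} ∘ g ∘ f`. Identify `ℝ/ℤ` with the projective line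
via `x ↦ [cos πx : sin πx]`. Matrices of positive determinant act on it, and `J = !![0, -1; 1, 0]`
acts as the half-turn `r_{1/2}`. The matrices `A = !![1, -4; 0, 3]` and `B = !![3, 7; 1, 3]`
satisfy `A * B = J * (B * A)`, so the homeomorphisms they induce satisfy the required relation.
To get monotone lifts to `ℝ`, factor `A` and `B` into matrices with positive definite symmetric
part: such a matrix turns every vector by an angle in `(-π/2, π/2)`, which `arctan` measures.
-/

/-- A homeomorphism of the circle `ℝ/ℤ` is orientation-preserving if it admits a
continuous monotone increasing lift `ℝ → ℝ`. -/
def OrientationPreserving (f : AddCircle (1 : ℝ) ≃ₜ AddCircle (1 : ℝ)) : Prop :=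
  ∃ F : ℝ → ℝ, Continuous F ∧ StrictMono F ∧
    ∀ x : ℝ, ((F x : ℝ) : AddCircle (1 : ℝ)) = f ((x : ℝ) : AddCircle (1 : ℝ))

open Real Matrix

noncomputable section

lemma OrientationPreserving.trans {f g : AddCircle (1 : ℝ) ≃ₜ AddCircle (1 : ℝ)}
    (hf : OrientationPreserving f) (hg : OrientationPreserving g) :
    OrientationPreserving (f.trans g) := by
  obtain ⟨F, hFc, hFm, hF⟩ := hf
  obtain ⟨G, hGc, hGm, hG⟩ := hg
  exact ⟨G ∘ F, hGc.comp hFc, hGm.comp hFm, fun x ↦ by simp [hF, hG]⟩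

lemma orientationPreserving_addLeft (a : ℝ) :
    OrientationPreserving (Homeomorph.addLeft (a : AddCircle (1 : ℝ))) :=
  ⟨(a + ·), continuous_const_add a, strictMono_id.const_add a, fun _ ↦ rfl⟩

namespace CircleDeg1Lift

lemma periodic_coe (f : CircleDeg1Lift) :
    Function.Periodic (fun x ↦ (f x : AddCircle (1 : ℝ))) 1 :=
  fun x ↦ by simp only [map_add_one, AddCircle.coe_add_period]

def toAddCircleHomeomorph (f : CircleDeg1Liftˣ) :
    AddCircle (1 : ℝ) ≃ₜ AddCircle (1 : ℝ) where
  toFun := (periodic_coe f).lift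
  invFun := (periodic_coe ↑f⁻¹).lift
  left_inv z := by
    induction z using QuotientAddGroup.induction_on with
    | H x => simp
  right_inv z := by
    induction z using QuotientAddGroup.induction_on with
    | H x => simp
  continuous_toFun :=
    (continuous_quotient_mk'.comp (toOrderIso f).continuous).quotient_lift _
  continuous_invFun :=
    (continuous_quotient_mk'.comp (toOrderIso f⁻¹).continuous).quotient_lift _

@[simp]
lemma toAddCircleHomeomorph_coe (f : CircleDeg1Liftˣ) (x : ℝ) :
    toAddCircleHomeomorph f x = (f x : AddCircle (1 : ℝ)) :=
  rfl

lemma continuous_units (f : CircleDeg1Liftˣ) : Continuous f :=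
  (toOrderIso f).continuous

lemma orientationPreserving_toAddCircleHomeomorph (f : CircleDeg1Liftˣ) :
    OrientationPreserving (toAddCircleHomeomorph f) :=
  ⟨f, continuous_units f, (toOrderIso f).strictMono, fun _ ↦ rfl⟩

lemma exists_units_coe_eq {F : ℝ → ℝ} (hc : Continuous F) (hinj : F.Injective)
    (hF : ∀ x, F (x + 1) = F x + 1) : ∃ f : CircleDeg1Liftˣ, ⇑f = F := by
  have hmono : StrictMono F := by
    refine (hc.strictMono_of_inj hinj).resolve_right fun hanti ↦ ?_
    have := hanti (lt_add_one 0)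
    rw [hF] at this
    linarith
  let f : CircleDeg1Lift := ⟨⟨F, hmono.monotone⟩, hF⟩
  have hbij : Function.Bijective f := ⟨hinj, f.continuous_iff_surjective.mp hc⟩
  exact ⟨(isUnit_iff_bijective.mpr hbij).unit, rfl⟩

end CircleDeg1Lift

def dirVec (x : ℝ) : Fin 2 → ℝ := ![cos (π * x), sin (π * x)]

def rotationMatrix (s : ℝ) : Matrix (Fin 2) (Fin 2) ℝ :=
  !![cos (π * s), -sin (π * s); sin (π * s), cos (π * s)]

/-- Since `dirVec (x + 1) = -dirVec x`, such an `F` descends to the action of `M` on the projective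
line `ℝ/ℤ`; asking for `0 < r` pins `F` down up to adding an even integer. -/
def IsAngleLift (M : Matrix (Fin 2) (Fin 2) ℝ) (F : ℝ → ℝ) : Prop :=
  ∀ x, ∃ r : ℝ, 0 < r ∧ M *ᵥ dirVec x = r • dirVec (F x)

lemma continuous_dirVec : Continuous dirVec := by
  unfold dirVec
  fun_prop

lemma dirVec_add_one (x : ℝ) : dirVec (x + 1) = -dirVec x := by
  ext i; fin_cases i <;> simp [dirVec, mul_add]

lemma dirVec_add_half (x : ℝ) : dirVec (x + 1 / 2) = ![-sin (π * x), cos (π * x)] := by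
  ext i; fin_cases i <;>
    simp [dirVec, mul_add, ← div_eq_mul_inv, cos_add_pi_div_two, sin_add_pi_div_two]

lemma rotationMatrix_mulVec_dirVec (s x : ℝ) :
    rotationMatrix s *ᵥ dirVec x = dirVec (x + s) := by
  ext i; fin_cases i <;>
    simp [rotationMatrix, dirVec, mulVec, dotProduct, Fin.sum_univ_two, mul_add, cos_add,
      sin_add] <;> ring

lemma rotationMatrix_half : rotationMatrix (1 / 2) = !![0, -1; 1, 0] := by
  rw [rotationMatrix, mul_one_div, cos_pi_div_two, sin_pi_div_two]

lemma exists_int_of_dirVec_eq_smul {x y c : ℝ} (hc : 0 < c) (h : dirVec x = c • dirVec y) :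
    ∃ k : ℤ, x = y + 2 * k := by
  have h0 := congrFun h 0
  have h1 := congrFun h 1
  simp only [dirVec, Pi.smul_apply, smul_eq_mul, cons_val_zero, cons_val_one] at h0 h1
  have hc1 : c = 1 := by
    have : c ^ 2 = 1 := by
      have := sin_sq_add_cos_sq (π * x)
      rw [h0, h1, ← sin_sq_add_cos_sq (π * y)] at this
      nlinarith [sin_sq_add_cos_sq (π * y)]
    nlinarith
  subst hc1
  have : cos (π * (x - y)) = 1 := by
    rw [mul_sub, cos_sub, h0, h1, one_mul, one_mul, ← sq, ← sq, cos_sq_add_sin_sq]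
  obtain ⟨k, hk⟩ := (cos_eq_one_iff _).mp this
  refine ⟨k, ?_⟩
  have := pi_pos
  field_simp at hk
  linarith

namespace IsAngleLift

variable {M N : Matrix (Fin 2) (Fin 2) ℝ} {F G : ℝ → ℝ}

lemma mul (hF : IsAngleLift M F) (hG : IsAngleLift N G) : IsAngleLift (M * N) (F ∘ G) := by
  intro x
  obtain ⟨s, hs, hsx⟩ := hG x
  obtain ⟨r, hr, hrx⟩ := hF (G x)
  exact ⟨s * r, mul_pos hs hr, by
    rw [← mulVec_mulVec, hsx, mulVec_smul, hrx, smul_smul, Function.comp_apply]⟩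

lemma rotationMatrix_mul (hF : IsAngleLift M F) (s : ℝ) :
    IsAngleLift (rotationMatrix s * M) (fun x ↦ F x + s) := by
  intro x
  obtain ⟨r, hr, hrx⟩ := hF x
  exact ⟨r, hr, by rw [← mulVec_mulVec, hrx, mulVec_smul, rotationMatrix_mulVec_dirVec]⟩

lemma exists_eq_add_of_isAngleLift (hF : IsAngleLift M F) (hG : IsAngleLift M G)
    (hFc : Continuous F) (hGc : Continuous G) : ∃ k : ℤ, ∀ x, F x = G x + 2 * k := by
  have hpt : ∀ x, ∃ k : ℤ, F x - G x = 2 * k := by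
    intro x
    obtain ⟨r, hr, hrx⟩ := hF x
    obtain ⟨s, hs, hsx⟩ := hG x
    have : dirVec (F x) = (s / r) • dirVec (G x) := by
      rw [div_eq_inv_mul, ← smul_smul, ← hsx, hrx, smul_smul, inv_mul_cancel₀ hr.ne',
        one_smul]
    obtain ⟨k, hk⟩ := exists_int_of_dirVec_eq_smul (div_pos hs hr) this
    exact ⟨k, by rw [hk]; ring⟩
  choose k hk using hpt
  have hkc : Continuous k := by
    rw [Int.isClosedEmbedding_coe_real.continuous_iff]
    have : (fun x ↦ (k x : ℝ)) = fun x ↦ (F x - G x) / 2 := by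
      funext x; rw [hk x]; ring
    rw [Function.comp_def, this]
    fun_prop
  refine ⟨k 0, fun x ↦ ?_⟩
  rw [← PreconnectedSpace.constant inferInstance hkc (x := x), ← hk x]
  ring

lemma injective (hM : M.det ≠ 0) (hF : IsAngleLift M F) (hper : ∀ x, F (x + 1) = F x + 1) :
    F.Injective := by
  intro x y hxy
  obtain ⟨r, hr, hrx⟩ := hF x
  obtain ⟨s, hs, hsy⟩ := hF y
  have : M *ᵥ dirVec x = M *ᵥ ((r / s) • dirVec y) := by
    rw [mulVec_smul, hsy, hrx, hxy, smul_smul, div_mul_cancel₀ _ hs.ne']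
  obtain ⟨k, hk⟩ :=
    exists_int_of_dirVec_eq_smul (div_pos hr hs) (mulVec_injective_of_det_ne_zero hM this)
  have hperiodic : Function.Periodic (fun x ↦ F x - x) 1 := fun x ↦ by
    simp only [hper]; ring
  have := hperiodic.int_mul (2 * k) y
  rw [Int.cast_mul, Int.cast_two, mul_one, ← hk] at this
  linarith

end IsAngleLift

lemma exists_pos_smul_dirVec_of_dotProduct_pos {v : Fin 2 → ℝ} {x : ℝ}
    (h : 0 < dirVec x ⬝ᵥ v) :
    ∃ r : ℝ, 0 < r ∧
      v = r • dirVec (x + arctan ((dirVec (x + 1 / 2) ⬝ᵥ v) / (dirVec x ⬝ᵥ v)) / π) := by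
  set t := (dirVec (x + 1 / 2) ⬝ᵥ v) / (dirVec x ⬝ᵥ v)
  have hsqrt : 0 < √(1 + t ^ 2) := by positivity
  refine ⟨(dirVec x ⬝ᵥ v) * √(1 + t ^ 2), by positivity, ?_⟩
  have ht : t * (dirVec x ⬝ᵥ v) = dirVec (x + 1 / 2) ⬝ᵥ v := div_mul_cancel₀ _ h.ne'
  have hπ : π * (x + arctan t / π) = π * x + arctan t := by field_simp
  clear_value t
  rw [dirVec_add_half] at ht
  simp only [dirVec, dotProduct, Fin.sum_univ_two, cons_val_zero, cons_val_one] at ht ⊢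
  rw [hπ, cos_add, sin_add, cos_arctan, sin_arctan]
  have hpyth := cos_sq_add_sin_sq (π * x)
  ext i; fin_cases i
  · simp only [Fin.zero_eta, Fin.isValue, Pi.smul_apply, cons_val_zero, smul_eq_mul]
    field_simp
    linear_combination (-(v 0)) * hpyth + sin (π * x) * ht
  · simp only [Fin.mk_one, Fin.isValue, Pi.smul_apply, cons_val_one, cons_val_zero,
      smul_eq_mul]
    field_simp
    linear_combination (-(v 1)) * hpyth - cos (π * x) * ht

/-- `dirVec (x + 1 / 2)` is `dirVec x` turned by a right angle, so this is the angle from `dirVec x`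
to `M *ᵥ dirVec x` when that angle is acute. -/
def angleLift (M : Matrix (Fin 2) (Fin 2) ℝ) (x : ℝ) : ℝ :=
  x + arctan ((dirVec (x + 1 / 2) ⬝ᵥ M *ᵥ dirVec x) / (dirVec x ⬝ᵥ M *ᵥ dirVec x)) / π

section angleLift

variable {M N : Matrix (Fin 2) (Fin 2) ℝ}

lemma isAngleLift_angleLift (hM : ∀ x, 0 < dirVec x ⬝ᵥ M *ᵥ dirVec x) :
    IsAngleLift M (angleLift M) :=
  fun x ↦ exists_pos_smul_dirVec_of_dotProduct_pos (hM x)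

lemma continuous_angleLift (hM : ∀ x, 0 < dirVec x ⬝ᵥ M *ᵥ dirVec x) :
    Continuous (angleLift M) := by
  have hu := continuous_dirVec
  have hv : Continuous fun x ↦ dirVec (x + 1 / 2) := continuous_dirVec.comp (by fun_prop)
  refine continuous_id.add ((continuous_arctan.comp ?_).div_const _)
  exact Continuous.div (by fun_prop) (by fun_prop) fun x ↦ (hM x).ne'

lemma angleLift_add_one (x : ℝ) : angleLift M (x + 1) = angleLift M x + 1 := by
  simp only [angleLift, add_right_comm x 1, dirVec_add_one, mulVec_neg, neg_dotProduct,
    dotProduct_neg, neg_neg]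

lemma dirVec_dotProduct_mulVec_pos {a b c d : ℝ} (ha : 0 < a) (hdisc : (b + c) ^ 2 < 4 * a * d)
    (x : ℝ) : 0 < dirVec x ⬝ᵥ !![a, b; c, d] *ᵥ dirVec x := by
  have hd : 0 < d := by nlinarith [sq_nonneg (b + c)]
  have hpyth := cos_sq_add_sin_sq (π * x)
  simp only [dotProduct, dirVec, mulVec, of_apply, cons_val', cons_val_fin_one, Fin.sum_univ_two,
    Fin.isValue, cons_val_zero, cons_val_one]
  nlinarith [sq_nonneg (2 * a * cos (π * x) + (b + c) * sin (π * x)),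
    sq_nonneg (2 * d * sin (π * x) + (b + c) * cos (π * x))]

lemma exists_units_isAngleLift_mul (hM : ∀ x, 0 < dirVec x ⬝ᵥ M *ᵥ dirVec x)
    (hN : ∀ x, 0 < dirVec x ⬝ᵥ N *ᵥ dirVec x) (hdet : (M * N).det ≠ 0) :
    ∃ f : CircleDeg1Liftˣ, IsAngleLift (M * N) f := by
  have hlift := (isAngleLift_angleLift hM).mul (isAngleLift_angleLift hN)
  have hadd (x : ℝ) :
      (angleLift M ∘ angleLift N) (x + 1) = (angleLift M ∘ angleLift N) x + 1 := by
    simp only [Function.comp_apply, angleLift_add_one]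
  obtain ⟨f, hf⟩ := CircleDeg1Lift.exists_units_coe_eq
    ((continuous_angleLift hM).comp (continuous_angleLift hN)) (hlift.injective hdet hadd) hadd
  exact ⟨f, hf ▸ hlift⟩

end angleLift

lemma coe_half_ne_zero : ((1 / 2 : ℝ) : AddCircle (1 : ℝ)) ≠ 0 := by
  rw [Ne, AddCircle.coe_eq_zero_iff]
  rintro ⟨n, hn⟩
  have : (2 * n : ℤ) = 1 := by
    rw [zsmul_one] at hn
    exact_mod_cast (by linarith : (2 * n : ℝ) = 1)
  omega

lemma exists_units_apply_apply_eq_add_half :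
    ∃ f g : CircleDeg1Liftˣ, ∃ k : ℤ, ∀ x, f (g x) = g (f x) + 1 / 2 + 2 * k := by
  obtain ⟨f, hf⟩ := exists_units_isAngleLift_mul (M := !![1, -1; 0, 1]) (N := !![1, -1; 0, 3])
    (dirVec_dotProduct_mulVec_pos (by norm_num) (by norm_num))
    (dirVec_dotProduct_mulVec_pos (by norm_num) (by norm_num)) (by norm_num [det_fin_two])
  obtain ⟨g, hg⟩ := exists_units_isAngleLift_mul (M := !![2, 1; 0, 1]) (N := !![1, 2; 1, 3])
    (dirVec_dotProduct_mulVec_pos (by norm_num) (by norm_num))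
    (dirVec_dotProduct_mulVec_pos (by norm_num) (by norm_num)) (by norm_num [det_fin_two])
  have hJBA : !![(0 : ℝ), -1; 1, 0] * (!![2, 1; 0, 1] * !![1, 2; 1, 3] *
      (!![1, -1; 0, 1] * !![1, -1; 0, 3])) =
      !![1, -1; 0, 1] * !![1, -1; 0, 3] * (!![2, 1; 0, 1] * !![1, 2; 1, 3]) := by
    norm_num [mul_fin_two]
  have hJ := (hg.mul hf).rotationMatrix_mul (1 / 2)
  rw [rotationMatrix_half, hJBA] at hJ
  obtain ⟨k, hk⟩ := (hf.mul hg).exists_eq_add_of_isAngleLift hJ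
    ((CircleDeg1Lift.continuous_units f).comp (CircleDeg1Lift.continuous_units g))
    (((CircleDeg1Lift.continuous_units g).comp (CircleDeg1Lift.continuous_units f)).add
      continuous_const)
  exact ⟨f, g, k, hk⟩

lemma exists_orientationPreserving_trans_eq_trans_addLeft_half :
    ∃ f g : AddCircle (1 : ℝ) ≃ₜ AddCircle (1 : ℝ),
      OrientationPreserving f ∧ OrientationPreserving g ∧
        g.trans f =
          (f.trans g).trans (Homeomorph.addLeft ((1 / 2 : ℝ) : AddCircle (1 : ℝ))) := by
  obtain ⟨f, g, k, hfg⟩ := exists_units_apply_apply_eq_add_half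
  open CircleDeg1Lift in
  refine ⟨toAddCircleHomeomorph f, toAddCircleHomeomorph g,
    orientationPreserving_toAddCircleHomeomorph f, orientationPreserving_toAddCircleHomeomorph g,
    Homeomorph.ext fun z ↦ ?_⟩
  induction z using QuotientAddGroup.induction_on with
  | H x =>
    have h2k : ((2 * k : ℝ) : AddCircle (1 : ℝ)) = 0 :=
      (AddCircle.coe_eq_zero_iff 1).mpr ⟨2 * k, by simp⟩
    simp only [Homeomorph.trans_apply, CircleDeg1Lift.toAddCircleHomeomorph_coe, hfg,
      AddCircle.coe_add, h2k, add_zero, Homeomorph.coe_addLeft]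
    exact add_comm _ _

end

/-- There is no group homomorphism `τ : Homeo₊(S¹) → ℝ/ℤ` with
`τ(r_a) = a` for every rotation `r_a : x ↦ x + a`; i.e. there is no retraction of
`Homeo₊(S¹)` onto its rotation subgroup which is a group homomorphism. -/
theorem no_homomorphic_retraction_onto_rotations :
    ¬ ∃ τ : (AddCircle (1 : ℝ) ≃ₜ AddCircle (1 : ℝ)) → AddCircle (1 : ℝ),
      (∀ f g : AddCircle (1 : ℝ) ≃ₜ AddCircle (1 : ℝ),
        OrientationPreserving f → OrientationPreserving g →
          τ (f.trans g) = τ f + τ g) ∧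
      (∀ a : AddCircle (1 : ℝ), τ (Homeomorph.addLeft a) = a) := by
  rintro ⟨τ, hτ, hrot⟩
  obtain ⟨f, g, hf, hg, hfg⟩ := exists_orientationPreserving_trans_eq_trans_addLeft_half
  have h := congrArg τ hfg
  rw [hτ _ _ hg hf, hτ _ _ (hf.trans hg) (orientationPreserving_addLeft _), hτ _ _ hf hg, hrot,
    add_comm (τ g)] at h
  exact coe_half_ne_zero (left_eq_add.mp h)
end
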